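/- arXiv:1805.03867 — 7 statements merged into one kernel-verified Lean document; each statement's English description precedes it below -/
import Mathlib

section
/- Let U be a finite universe of size n, let S be a collection of subsets of U that is an (r, ℓ, ζ)-intersection disperser, let F = {f_S}_{S∈S} be any collection of functions f_S : S → {0,1}, and let G^{F,ζ} be the associated two-level consistency graph. Then for any integer p with 2 ≤ p ≤ ℓ and any red edge {S₁, S₂} of G^{F,ζ}, there are fewer than r pairwise disjoint p-walks from S₁ to S₂ in G^{F,ζ}. -/
open Finset

/-- `disa S f i j`: the number of elements `x ∈ S i ∩ S j` on which the local
functions `f i` and `f j` disagree. -/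
def disa {U ι : Type*} [DecidableEq U] (S : ι → Finset U) (f : ι → U → Bool) (i j : ι) : ℕ :=
  ((S i ∩ S j).filter fun x => f i x ≠ f j x).card

/-- `IsBlueWalk Eb w`: the tuple `w = (v₁, …, v_{ℓ+1})` is an `ℓ`-walk, i.e. consecutive
vertices are joined by blue edges. -/
def IsBlueWalk {V : Type*} (Eb : V → V → Prop) {ℓ : ℕ} (w : Fin (ℓ + 1) → V) : Prop :=
  ∀ i : Fin ℓ, Eb (w i.castSucc) (w i.succ)

/-- `S` is an `(r, ℓ, η)`-intersection disperser: for any `r` pairwise disjoint nonempty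
subcollections, each of size at most `ℓ`, the union of their intersections has at least a
`(1 - η)` fraction of the universe. -/
def IsDisperser {U ι : Type*} [Fintype U] [DecidableEq U]
    (S : ι → Finset U) (r ℓ : ℕ) (η : ℝ) : Prop :=
  ∀ I : Fin r → Finset ι,
    (∀ a, (I a).Nonempty) →
    (∀ a, (I a).card ≤ ℓ) →
    (Pairwise fun a b => Disjoint (I a) (I b)) →
    (1 - η) * (Fintype.card U : ℝ) ≤ ((Finset.univ.sup fun a => (I a).inf S).card : ℝ)

/-- If `S` is an `(r, ℓ, ζ)`-intersection disperser, then for any collection of local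
functions, any `2 ≤ p ≤ ℓ`, and any red edge `{S₁, S₂}` of the two-level consistency graph
`G^{F,ζ}` (blue edges = consistent pairs, red edges = `ζ`-inconsistent pairs), there are
fewer than `r` pairwise disjoint `p`-walks from `S₁` to `S₂` (walks disjoint = sharing no
vertices other than endpoints). -/
theorem stmt0 {U ι : Type*} [Fintype U] [DecidableEq U] [Fintype ι] [DecidableEq ι]
    (S : ι → Finset U) (f : ι → U → Bool) (r ℓ p : ℕ) (ζ : ℝ)
    (hζ0 : 0 ≤ ζ) (hζ1 : ζ ≤ 1) (hℓ : 2 ≤ ℓ)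
    (hdisp : IsDisperser S r ℓ ζ)
    (hp2 : 2 ≤ p) (hpℓ : p ≤ ℓ)
    (S₁ S₂ : ι) (hne : S₁ ≠ S₂)
    (hred : ζ * (Fintype.card U : ℝ) < (disa S f S₁ S₂ : ℝ))
    (W : Set (Fin (p + 1) → ι))
    (hwalk : ∀ w ∈ W, IsBlueWalk (fun i j => i ≠ j ∧ disa S f i j = 0) w ∧
      w 0 = S₁ ∧ w (Fin.last p) = S₂)
    (hdisj : W.Pairwise fun w w' => ∀ i j : Fin (p + 1),
      i ≠ 0 → i ≠ Fin.last p → j ≠ 0 → j ≠ Fin.last p → w i ≠ w' j) :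
    W.ncard < r := by
  by_contra h
  push_neg at h
  set D : Finset U := (S S₁ ∩ S S₂).filter (fun x => f S₁ x ≠ f S₂ x) with hDdef
  have hDcard : disa S f S₁ S₂ = D.card := rfl
  have hlast0 : (Fin.last p : Fin (p + 1)) ≠ 0 := by
    intro hcontr
    have := congrArg Fin.val hcontr
    simp only [Fin.val_last, Fin.val_zero] at this
    omega
  set i1 : Fin (p + 1) := ⟨1, by omega⟩ with hi1def
  have hone0 : i1 ≠ 0 := by
    intro hcontr
    have := congrArg Fin.val hcontr
    simp only [hi1def, Fin.val_zero] at this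
    omega
  have honelast : i1 ≠ Fin.last p := by
    intro hcontr
    have := congrArg Fin.val hcontr
    simp only [hi1def, Fin.val_last] at this
    omega
  -- extract r distinct walks
  obtain ⟨g, hgmem, hginj⟩ : ∃ g : Fin r → (Fin (p + 1) → ι),
      (∀ a, g a ∈ W) ∧ Function.Injective g := by
    rcases Nat.eq_zero_or_pos r with hr | hr
    · subst hr
      exact ⟨Fin.elim0, fun a => a.elim0, fun a => a.elim0⟩
    · have hfin : W.Finite := by
        by_contra hinf
        rw [Set.Infinite.ncard (hinf)] at h; omega
      have hcard : r ≤ hfin.toFinset.card := by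
        rwa [Set.ncard_eq_toFinset_card W hfin] at h
      obtain ⟨t, hts, htc⟩ := Finset.exists_subset_card_eq hcard
      let e := Finset.equivFinOfCardEq htc
      refine ⟨fun a => (e.symm a : Fin (p + 1) → ι), fun a => ?_, ?_⟩
      · exact hfin.mem_toFinset.mp (hts (e.symm a).2)
      · exact Subtype.val_injective.comp e.symm.injective
  -- key agreement lemma along a blue walk
  have key : ∀ w ∈ W, ∀ x : U, x ∈ S S₁ → x ∈ S S₂ →
      (∀ i : Fin (p + 1), i ≠ 0 → i ≠ Fin.last p → x ∈ S (w i)) →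
      f S₁ x = f S₂ x := by
    intro w hw x hx1 hx2 hint
    obtain ⟨hbw, h0, hl⟩ := hwalk w hw
    have hx : ∀ i : Fin (p + 1), x ∈ S (w i) := by
      intro i
      by_cases hi0 : i = 0
      · rw [hi0, h0]; exact hx1
      by_cases hil : i = Fin.last p
      · rw [hil, hl]; exact hx2
      exact hint i hi0 hil
    have hall : ∀ i : Fin (p + 1), f (w 0) x = f (w i) x := by
      intro i
      refine Fin.induction rfl (fun i ih => ?_) i
      have hb := (hbw i).2
      have hfe : f (w i.castSucc) x = f (w i.succ) x := by
        by_contra hne'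
        have hxin : x ∈ (S (w i.castSucc) ∩ S (w i.succ)).filter
            (fun y => f (w i.castSucc) y ≠ f (w i.succ) y) :=
          Finset.mem_filter.mpr ⟨Finset.mem_inter.mpr ⟨hx _, hx _⟩, hne'⟩
        have hemp := Finset.card_eq_zero.mp hb
        rw [hemp] at hxin
        exact absurd hxin (Finset.notMem_empty x)
      exact ih.trans hfe
    have := hall (Fin.last p)
    rwa [h0, hl] at this
  -- subcollections: interior vertices of each walk
  set I : Fin r → Finset ι := fun a =>
    ((Finset.univ : Finset (Fin (p + 1))).filter
      (fun i => i ≠ 0 ∧ i ≠ Fin.last p)).image (g a) with hIdef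
  have hInonempty : ∀ a, (I a).Nonempty := by
    intro a
    exact ⟨g a i1, Finset.mem_image.mpr ⟨i1,
      Finset.mem_filter.mpr ⟨Finset.mem_univ _, hone0, honelast⟩, rfl⟩⟩
  have hIcard : ∀ a, (I a).card ≤ ℓ := by
    intro a
    refine le_trans (Finset.card_image_le) ?_
    have hsub : ((Finset.univ : Finset (Fin (p + 1))).filter
        (fun i => i ≠ 0 ∧ i ≠ Fin.last p)) ⊆
        ((Finset.univ : Finset (Fin (p + 1))).erase 0).erase (Fin.last p) := by
      intro i hi
      obtain ⟨-, hi0, hil⟩ := Finset.mem_filter.mp hi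
      exact Finset.mem_erase.mpr ⟨hil, Finset.mem_erase.mpr ⟨hi0, Finset.mem_univ _⟩⟩
    refine le_trans (Finset.card_le_card hsub) ?_
    rw [Finset.card_erase_of_mem (Finset.mem_erase.mpr ⟨hlast0, Finset.mem_univ _⟩),
      Finset.card_erase_of_mem (Finset.mem_univ _), Finset.card_univ, Fintype.card_fin]
    omega
  have hIdisj : Pairwise fun a b => Disjoint (I a) (I b) := by
    intro a b hab
    rw [Finset.disjoint_left]
    intro j hja hjb
    obtain ⟨i, hi, hij⟩ := Finset.mem_image.mp hja
    obtain ⟨i', hi', hij'⟩ := Finset.mem_image.mp hjb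
    obtain ⟨-, hi0, hil⟩ := Finset.mem_filter.mp hi
    obtain ⟨-, hi0', hil'⟩ := Finset.mem_filter.mp hi'
    exact hdisj (hgmem a) (hgmem b) (fun he => hab (hginj he)) i i' hi0 hil hi0' hil'
      (hij.trans hij'.symm)
  have hsup := hdisp I hInonempty hIcard hIdisj
  -- D is disjoint from the union of intersections
  have hDsup : Disjoint D (Finset.univ.sup fun a => (I a).inf S) := by
    rw [Finset.disjoint_left]
    intro x hxD hxsup
    obtain ⟨a, -, hxa⟩ := Finset.mem_sup.mp hxsup
    obtain ⟨hxmem, hxne⟩ := Finset.mem_filter.mp hxD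
    obtain ⟨hx1, hx2⟩ := Finset.mem_inter.mp hxmem
    refine hxne (key (g a) (hgmem a) x hx1 hx2 ?_)
    intro i hi0 hil
    exact Finset.mem_inf.mp hxa (g a i) (Finset.mem_image.mpr
      ⟨i, Finset.mem_filter.mpr ⟨Finset.mem_univ _, hi0, hil⟩, rfl⟩)
  have hcards : D.card + (Finset.univ.sup fun a => (I a).inf S).card ≤ Fintype.card U := by
    rw [← Finset.card_union_of_disjoint hDsup]
    exact Finset.card_le_univ _
  have hcardsR : (D.card : ℝ) + ((Finset.univ.sup fun a => (I a).inf S).card : ℝ)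
      ≤ (Fintype.card U : ℝ) := by exact_mod_cast hcards
  rw [hDcard] at hred
  linarith
end

section
/- Let G = (V, E_r ∪ E_b) be a red/blue graph, let r ≥ 1 and z ≥ 3 be integers, and for i ≥ 2 set B_i = (r·i)^{2(i-1)} and B_1 = 1. Suppose that for every integer i with 2 ≤ i ≤ z−1 and all vertices u, v ∈ V, the number of red-filled i-walks from u to v is at most B_i. Then for all vertices S₁, S₂, S ∈ V, the number of red-filled z-walks (T₁ = S₁, T₂, …, T_z, T_{z+1} = S₂) from S₁ to S₂ with S ∈ {T₂, …, T_z} is at most B_z/(z·r). -/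
open Finset

/-- `IsRedFilled Er w`: every pair of non-consecutive vertices of the walk `w` is joined
by a red edge. -/
def IsRedFilled {V : Type*} (Er : V → V → Prop) {ℓ : ℕ} (w : Fin (ℓ + 1) → V) : Prop :=
  ∀ i j : Fin (ℓ + 1), (i : ℕ) + 1 < (j : ℕ) → Er (w i) (w j)

/-- The set of red-filled `ℓ`-walks from `u` to `v`. -/
def RedFilledWalks {V : Type*} (Er Eb : V → V → Prop) (ℓ : ℕ) (u v : V) :
    Set (Fin (ℓ + 1) → V) :=
  {w | IsBlueWalk Eb w ∧ IsRedFilled Er w ∧ w 0 = u ∧ w (Fin.last ℓ) = v}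

/-!
Cutting a red-filled `z`-walk at an interior position `j` leaves a red-filled `j`-walk and a
red-filled `(z - j)`-walk, and the cut is injective. So at most `B_j B_{z-j}` walks pass through
`S` at position `j`, and `B_j B_{z-j} (rz)² ≤ B_z`. Summing over the `z - 1 ≤ rz` interior
positions gives `B_z / (rz)`.
-/

def subwalk {V : Type*} {ℓ : ℕ} (w : Fin (ℓ + 1) → V) (a m : ℕ) (h : a + m ≤ ℓ) :
    Fin (m + 1) → V :=
  fun i => w ⟨a + i, by omega⟩

section Subwalk

variable {V : Type*} {ℓ : ℕ} {w : Fin (ℓ + 1) → V} {a m : ℕ}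

lemma IsBlueWalk.subwalk {Eb : V → V → Prop} (hw : IsBlueWalk Eb w) (h : a + m ≤ ℓ) :
    IsBlueWalk Eb (subwalk w a m h) := fun i => by
  convert hw ⟨a + i, by omega⟩ using 2 <;> simp [_root_.subwalk, add_assoc]

lemma IsRedFilled.subwalk {Er : V → V → Prop} (hw : IsRedFilled Er w) (h : a + m ≤ ℓ) :
    IsRedFilled Er (subwalk w a m h) := fun i j hij =>
  hw ⟨a + i, by omega⟩ ⟨a + j, by omega⟩ (by simp; omega)

lemma eq_of_subwalk_eq {w' : Fin (ℓ + 1) → V} {j : ℕ} (hj : j ≤ ℓ)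
    (hpre : subwalk w 0 j (by omega) = subwalk w' 0 j (by omega))
    (hsuf : subwalk w j (ℓ - j) (by omega) = subwalk w' j (ℓ - j) (by omega)) : w = w' := by
  funext i
  rcases le_or_gt (i : ℕ) j with hi | hi
  · simpa [subwalk] using congrFun hpre ⟨i, by omega⟩
  · have := congrFun hsuf ⟨i - j, by omega⟩
    simp only [subwalk] at this
    convert this using 2 <;> ext <;> simp <;> omega

end Subwalk

-- The paper's `B_i`; the truncated subtraction gives `walkBound r 1 = 1 = B_1`.
def walkBound (r i : ℕ) : ℕ := (r * i) ^ (2 * (i - 1))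

lemma walkBound_mul_walkBound_mul_sq_le (r : ℕ) {a b : ℕ} (ha : 1 ≤ a) (hb : 1 ≤ b) :
    walkBound r a * walkBound r b * (r * (a + b)) ^ 2 ≤ walkBound r (a + b) := calc
  _ ≤ (r * (a + b)) ^ (2 * (a - 1)) * (r * (a + b)) ^ (2 * (b - 1)) * (r * (a + b)) ^ 2 := by
    unfold walkBound; gcongr <;> omega
  _ = walkBound r (a + b) := by
    rw [walkBound, ← pow_add, ← pow_add]; congr 1; omega

section Counting

variable {V : Type*} [Fintype V] (Er Eb : V → V → Prop)

lemma ncard_redFilledWalks_one_le (u v : V) : (RedFilledWalks Er Eb 1 u v).ncard ≤ 1 := by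
  rw [Set.ncard_le_one (Set.toFinite _)]
  rintro w ⟨-, -, hw0, hw1⟩ w' ⟨-, -, hw0', hw1'⟩
  funext i
  match i with
  | 0 => rw [hw0, hw0']
  | 1 => exact hw1.trans hw1'.symm

lemma ncard_redFilledWalks_through_le {ℓ : ℕ} (j : Fin (ℓ + 1)) (u v s : V) :
    {w ∈ RedFilledWalks Er Eb ℓ u v | w j = s}.ncard ≤
      (RedFilledWalks Er Eb j u s).ncard * (RedFilledWalks Er Eb (ℓ - j) s v).ncard := by
  have hj : (j : ℕ) ≤ ℓ := Nat.lt_succ_iff.mp j.isLt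
  rw [← Set.ncard_prod]
  refine Set.ncard_le_ncard_of_injOn
    (fun w => (subwalk w 0 j (by omega), subwalk w j (ℓ - j) (by omega))) ?_
    (fun w _ w' _ h => eq_of_subwalk_eq hj (congrArg Prod.fst h) (congrArg Prod.snd h))
    (Set.toFinite _)
  rintro w ⟨⟨hblue, hred, hw0, hwℓ⟩, hws⟩
  refine ⟨⟨hblue.subwalk (by omega), hred.subwalk (by omega), hw0, ?_⟩,
    ⟨hblue.subwalk (by omega), hred.subwalk (by omega), hws, ?_⟩⟩
  · exact (congrArg w (Fin.ext (zero_add _))).trans hws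
  · exact (congrArg w (Fin.ext (by simp; omega))).trans hwℓ


variable {Er Eb} {r ℓ : ℕ}

lemma ncard_redFilledWalks_through_mul_sq_le
    (hB : ∀ i, 1 ≤ i → i < ℓ → ∀ u v : V, (RedFilledWalks Er Eb i u v).ncard ≤ walkBound r i)
    {j : Fin (ℓ + 1)} (hj0 : j ≠ 0) (hjℓ : j ≠ Fin.last ℓ) (u v s : V) :
    {w ∈ RedFilledWalks Er Eb ℓ u v | w j = s}.ncard * (r * ℓ) ^ 2 ≤ walkBound r ℓ := by
  have h1 : 1 ≤ (j : ℕ) := Nat.one_le_iff_ne_zero.mpr (Fin.val_ne_iff.mpr hj0)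
  have h2 : (j : ℕ) < ℓ := Fin.val_lt_last hjℓ
  calc _ ≤ walkBound r j * walkBound r (ℓ - j) * (r * ℓ) ^ 2 := by
        gcongr
        exact (ncard_redFilledWalks_through_le Er Eb j u v s).trans
          (Nat.mul_le_mul (hB j h1 h2 u s) (hB (ℓ - j) (by omega) (by omega) s v))
    _ ≤ walkBound r ℓ := by
        simpa [Nat.add_sub_cancel' h2.le] using
          walkBound_mul_walkBound_mul_sq_le r h1 (by omega : 1 ≤ ℓ - j)

lemma ncard_redFilledWalks_interior_mul_le
    (hB : ∀ i, 1 ≤ i → i < ℓ → ∀ u v : V, (RedFilledWalks Er Eb i u v).ncard ≤ walkBound r i)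
    (hr : 1 ≤ r) (hℓ : 1 ≤ ℓ) (u v s : V) :
    {w ∈ RedFilledWalks Er Eb ℓ u v |
        ∃ j : Fin (ℓ + 1), j ≠ 0 ∧ j ≠ Fin.last ℓ ∧ w j = s}.ncard * (r * ℓ) ≤
      walkBound r ℓ := by
  set F : Finset (Fin (ℓ + 1)) := {j | j ≠ 0 ∧ j ≠ Fin.last ℓ}
  have hF : F.card ≤ r * ℓ := calc
    F.card ≤ (univ.erase 0).card := card_le_card fun j hj => by simp_all [F]
    _ = ℓ := by simp
    _ ≤ r * ℓ := Nat.le_mul_of_pos_left ℓ hr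
  have hunion : {w ∈ RedFilledWalks Er Eb ℓ u v |
      ∃ j : Fin (ℓ + 1), j ≠ 0 ∧ j ≠ Fin.last ℓ ∧ w j = s} =
      ⋃ j ∈ F, {w ∈ RedFilledWalks Er Eb ℓ u v | w j = s} := by
    ext w; simp [F, and_assoc]
  refine Nat.le_of_mul_le_mul_left ?_ (by positivity : 0 < r * ℓ)
  calc _ = (⋃ j ∈ F, {w ∈ RedFilledWalks Er Eb ℓ u v | w j = s}).ncard * (r * ℓ) ^ 2 := by
        rw [hunion]; ring
    _ ≤ (∑ j ∈ F, {w ∈ RedFilledWalks Er Eb ℓ u v | w j = s}.ncard) * (r * ℓ) ^ 2 := by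
        gcongr; exact F.set_ncard_biUnion_le _
    _ ≤ ∑ _j ∈ F, walkBound r ℓ := by
        rw [sum_mul]
        exact sum_le_sum fun j hj =>
          ncard_redFilledWalks_through_mul_sq_le hB (by simp_all [F]) (by simp_all [F]) u v s
    _ ≤ r * ℓ * walkBound r ℓ := by rw [sum_const, smul_eq_mul]; gcongr

end Counting

theorem stmt1_general {V : Type*} [Fintype V] (Er Eb : V → V → Prop)
    (r z : ℕ) (hr : 1 ≤ r) (hz : 3 ≤ z)
    (hind : ∀ i, 2 ≤ i → i ≤ z - 1 → ∀ u v : V,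
      (RedFilledWalks Er Eb i u v).ncard ≤ (r * i) ^ (2 * (i - 1)))
    (S₁ S₂ S : V) :
    ({w ∈ RedFilledWalks Er Eb z S₁ S₂ |
        ∃ j : Fin (z + 1), j ≠ 0 ∧ j ≠ Fin.last z ∧ w j = S}.ncard : ℝ) ≤
      ((r * z) ^ (2 * (z - 1)) : ℕ) / ((z : ℝ) * r) := by
  have hB : ∀ i, 1 ≤ i → i < z → ∀ u v : V,
      (RedFilledWalks Er Eb i u v).ncard ≤ walkBound r i := by
    intro i hi1 hiz u v
    rcases hi1.eq_or_lt with rfl | hi2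
    · exact ncard_redFilledWalks_one_le Er Eb u v
    · exact hind i hi2 (by omega) u v
  rw [le_div_iff₀ (by positivity), mul_comm (z : ℝ)]
  exact_mod_cast ncard_redFilledWalks_interior_mul_le hB hr (by omega) S₁ S₂ S

/-- Let `G = (V, E_r ∪ E_b)` be a red/blue graph, `r ≥ 1`, `z ≥ 3`, and set
`B_i = (r·i)^{2(i-1)}`. If for every `2 ≤ i ≤ z - 1` and all vertices `u, v` the number
of red-filled `i`-walks from `u` to `v` is at most `B_i`, then for all vertices
`S₁, S₂, S`, the number of red-filled `z`-walks from `S₁` to `S₂` containing `S` as an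
interior vertex is at most `B_z / (z·r)`. -/
theorem stmt1 {V : Type*} [Fintype V] (Er Eb : V → V → Prop)
    (hErs : Symmetric Er) (hEbs : Symmetric Eb)
    (hdisj : ∀ u v, ¬(Er u v ∧ Eb u v))
    (hirrR : ∀ v, ¬Er v v) (hirrB : ∀ v, ¬Eb v v)
    (r z : ℕ) (hr : 1 ≤ r) (hz : 3 ≤ z)
    (hind : ∀ i, 2 ≤ i → i ≤ z - 1 → ∀ u v : V,
      (RedFilledWalks Er Eb i u v).ncard ≤ (r * i) ^ (2 * (i - 1)))
    (S₁ S₂ S : V) :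
    ({w ∈ RedFilledWalks Er Eb z S₁ S₂ |
        ∃ j : Fin (z + 1), j ≠ 0 ∧ j ≠ Fin.last z ∧ w j = S}.ncard : ℝ) ≤
      ((r * z) ^ (2 * (z - 1)) : ℕ) / ((z : ℝ) * r) :=
  stmt1_general Er Eb r z hr hz hind S₁ S₂ S
end

section
/- Let U be a finite universe of size n and let S be a collection of subsets of U that is an (r, ℓ, ζ)-intersection disperser, with ℓ ≥ 2. Then for any collection F = {f_S}_{S∈S} of functions f_S : S → {0,1}, the two-level consistency graph G^{F,ζ} is ((rℓ)^{2(ℓ−1)}, ℓ)-red/blue-transitive. -/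
open Finset

/-!
Fix a red edge `u v`. No `r` blue walks from `u` to `v` of length at most `ℓ + 1` can have
pairwise disjoint interiors: by the disperser property the intersections of the interiors
cover more than `(1 - ζ) n` points, so one of them meets the more than `ζ n` points where
`f u` and `f v` disagree, whereas along a blue walk the local functions agree on every point
common to all its vertices. Greedily, at most `r (k - 1)` vertices then meet the interior of
every red-filled `k`-walk from `u` to `v`. Fixing such a vertex and its position splits a walk
into two shorter red-filled walks, whose endpoints again form red edges, so induction on `k`
gives a factor of at most `r (k - 1) (k - 1) ≤ (r ℓ)²` per step.
-/

section Walks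

variable {V : Type*} {Er Eb : V → V → Prop}

lemma IsBlueWalk.comp_shift {k m c : ℕ} {w : Fin (k + 1) → V} (hw : IsBlueWalk Eb w)
    (φ : Fin (m + 1) → Fin (k + 1)) (hφ : ∀ i, (φ i : ℕ) = c + i) :
    IsBlueWalk Eb (w ∘ φ) := by
  intro i
  have hi : c + i + 1 ≤ k := by
    have h := hφ i.succ
    rw [Fin.val_succ] at h
    have := (φ i.succ).isLt
    omega
  have h₁ : φ i.castSucc = (⟨c + i, by omega⟩ : Fin k).castSucc := Fin.ext (by simp [hφ])
  have h₂ : φ i.succ = (⟨c + i, by omega⟩ : Fin k).succ := Fin.ext (by simp [hφ]; omega)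
  show Eb (w (φ _)) (w (φ _))
  rw [h₁, h₂]
  exact hw _

lemma IsRedFilled.comp_shift {k m c : ℕ} {w : Fin (k + 1) → V} (hw : IsRedFilled Er w)
    (φ : Fin (m + 1) → Fin (k + 1)) (hφ : ∀ i, (φ i : ℕ) = c + i) :
    IsRedFilled Er (w ∘ φ) :=
  fun i j hij => hw (φ i) (φ j) (by rw [hφ, hφ]; omega)

lemma IsRedFilled.rel_zero_last {k : ℕ} {w : Fin (k + 1) → V} (hw : IsRedFilled Er w)
    (hk : 2 ≤ k) : Er (w 0) (w (Fin.last k)) :=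
  hw 0 (Fin.last k) (by simp; omega)

variable [Fintype V]

open Classical in
noncomputable def redFilledWalkFinset (Er Eb : V → V → Prop) (k : ℕ) (u v : V) :
    Finset (Fin (k + 1) → V) :=
  univ.filter (· ∈ RedFilledWalks Er Eb k u v)

lemma mem_redFilledWalkFinset {k : ℕ} {u v : V} {w : Fin (k + 1) → V} :
    w ∈ redFilledWalkFinset Er Eb k u v ↔
      IsBlueWalk Eb w ∧ IsRedFilled Er w ∧ w 0 = u ∧ w (Fin.last k) = v := by
  simp only [redFilledWalkFinset, mem_filter, mem_univ, true_and]
  rfl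

lemma ncard_redFilledWalks (k : ℕ) (u v : V) :
    (RedFilledWalks Er Eb k u v).ncard = #(redFilledWalkFinset Er Eb k u v) := by
  rw [← Set.ncard_coe_finset]
  congr
  ext w
  simp [mem_redFilledWalkFinset, RedFilledWalks]

lemma card_redFilledWalkFinset_le_one {k : ℕ} (hk : k ≤ 1) (u v : V) :
    #(redFilledWalkFinset Er Eb k u v) ≤ 1 := by
  refine card_le_one.2 fun w hw w' hw' => funext fun i => ?_
  rw [mem_redFilledWalkFinset] at hw hw'
  have hi : i = 0 ∨ i = Fin.last k := by
    have := i.isLt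
    simp only [Fin.ext_iff, Fin.val_zero, Fin.val_last]
    omega
  rcases hi with rfl | rfl
  · rw [hw.2.2.1, hw'.2.2.1]
  · rw [hw.2.2.2, hw'.2.2.2]

lemma card_filter_apply_eq_le [DecidableEq V] {k : ℕ} (u v x : V) (p : Fin (k + 1)) :
    #{w ∈ redFilledWalkFinset Er Eb k u v | w p = x} ≤
      #(redFilledWalkFinset Er Eb p u x) * #(redFilledWalkFinset Er Eb (k - p) x v) := by
  have hp := p.isLt
  let pre : Fin (p + 1) → Fin (k + 1) := fun j => ⟨j, by omega⟩
  let suf : Fin (k - p + 1) → Fin (k + 1) := fun j => ⟨p + j, by omega⟩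
  rw [← card_product]
  refine card_le_card_of_injOn (fun w => (w ∘ pre, w ∘ suf)) ?_ ?_
  · intro w hw
    obtain ⟨hw, hpx⟩ := mem_filter.1 hw
    obtain ⟨hb, hr, h0, hl⟩ := mem_redFilledWalkFinset.1 hw
    refine mem_product.2 ⟨mem_redFilledWalkFinset.2 ⟨hb.comp_shift pre (c := 0) (by simp [pre]),
      hr.comp_shift pre (c := 0) (by simp [pre]), ?_, ?_⟩, mem_redFilledWalkFinset.2
      ⟨hb.comp_shift suf (fun _ => rfl), hr.comp_shift suf (fun _ => rfl), ?_, ?_⟩⟩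
    · rw [← h0]; rfl
    · rw [← hpx]; rfl
    · rw [← hpx]; simp [suf]
    · rw [← hl]; simp only [Function.comp_apply, suf]; congr; simp; omega
  · intro w _ w' _ h
    funext j
    by_cases hj : (j : ℕ) ≤ p
    · exact congrFun (congrArg Prod.fst h) ⟨j, by omega⟩
    · have e : j = suf ⟨j - p, by omega⟩ := Fin.ext (by simp only [suf]; omega)
      rw [e]
      exact congrFun (congrArg Prod.snd h) _

end Walks

/-- Greedy: take any `t₀ ∈ T`, recurse on the members whose image avoids `g t₀`, and add
`g t₀` to the hitting set. -/
theorem exists_pairwise_disjoint_or_exists_hittingSet {α β : Type*} [DecidableEq β]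
    (g : α → Finset β) {m : ℕ} (hg : ∀ a, #(g a) ≤ m) (r : ℕ) (T : Finset α) :
    (∃ W : Fin r → α, (∀ i, W i ∈ T) ∧ Pairwise fun i j => Disjoint (g (W i)) (g (W j))) ∨
      ∃ X : Finset β, #X ≤ r * m ∧ ∀ t ∈ T, ¬Disjoint X (g t) := by
  induction r generalizing T with
  | zero => exact Or.inl ⟨Fin.elim0, fun i => i.elim0, fun i => i.elim0⟩
  | succ r ih =>
    rcases T.eq_empty_or_nonempty with rfl | ⟨t₀, ht₀⟩
    · exact Or.inr ⟨∅, by simp, by simp⟩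
    rcases ih {t ∈ T | Disjoint (g t) (g t₀)} with ⟨W, hWT, hW⟩ | ⟨X, hX, hXT⟩
    · left
      simp only [mem_filter] at hWT
      refine ⟨Fin.cons t₀ W, Fin.cases ht₀ fun i => (hWT i).1, ?_⟩
      intro i j hij
      cases i using Fin.cases <;> cases j using Fin.cases
      · exact absurd rfl hij
      · simpa using (hWT _).2.symm
      · simpa using (hWT _).2
      · simpa using hW (fun h => hij (congrArg Fin.succ h))
    · refine Or.inr ⟨X ∪ g t₀, ?_, fun t ht hdisj => ?_⟩
      · calc #(X ∪ g t₀) ≤ #X + #(g t₀) := card_union_le _ _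
          _ ≤ (r + 1) * m := by rw [add_mul, one_mul]; exact add_le_add hX (hg t₀)
      · rw [disjoint_union_left] at hdisj
        exact hXT t (mem_filter.2 ⟨ht, hdisj.2.symm⟩) hdisj.1

section Consistency

variable {U ι : Type*} [DecidableEq U] (S : ι → Finset U) (f : ι → U → Bool)

lemma disa_eq_zero_iff {i j : ι} :
    disa S f i j = 0 ↔ ∀ x ∈ S i, x ∈ S j → f i x = f j x := by
  simp [disa, filter_eq_empty_iff]

lemma IsBlueWalk.apply_zero_eq_apply_last {Eb : ι → ι → Prop}
    (hEb : ∀ i j, Eb i j → disa S f i j = 0) {k : ℕ} {w : Fin (k + 1) → ι}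
    (hw : IsBlueWalk Eb w) {x : U} (hx : ∀ i, x ∈ S (w i)) :
    f (w 0) x = f (w (Fin.last k)) x := by
  suffices ∀ i, f (w 0) x = f (w i) x from this _
  intro i
  induction i using Fin.induction with
  | zero => rfl
  | succ i ih => exact ih.trans <| (disa_eq_zero_iff S f).1 (hEb _ _ (hw i)) x (hx _) (hx _)

end Consistency

section Interior

variable {V : Type*} [DecidableEq V]

def walkInterior {k : ℕ} (w : Fin (k + 1) → V) : Finset V :=
  (Ioo 0 (Fin.last k)).image w

lemma card_walkInterior_le {k : ℕ} (w : Fin (k + 1) → V) : #(walkInterior w) ≤ k - 1 :=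
  card_image_le.trans_eq (by simp [Fin.card_Ioo])

lemma walkInterior_nonempty {k : ℕ} (w : Fin (k + 1) → V) (hk : 2 ≤ k) :
    (walkInterior w).Nonempty :=
  ⟨w ⟨1, by omega⟩, mem_image_of_mem w (by simp [Fin.lt_def]; omega)⟩

lemma mem_of_mem_inf_walkInterior {U : Type*} [Fintype U] [DecidableEq U] (S : V → Finset U)
    {k : ℕ} {w : Fin (k + 1) → V} {x : U} (hx : x ∈ (walkInterior w).inf S) (h0 : x ∈ S (w 0))
    (hl : x ∈ S (w (Fin.last k))) (i : Fin (k + 1)) : x ∈ S (w i) := by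
  rcases (Fin.zero_le i).eq_or_lt with rfl | hi0
  · exact h0
  rcases (Fin.le_last i).eq_or_lt with rfl | hil
  · exact hl
  exact (inf_le (mem_image_of_mem w (mem_Ioo.2 ⟨hi0, hil⟩)) : _ ≤ S (w i)) hx

lemma card_le_of_forall_not_disjoint_walkInterior {k B : ℕ} {T : Finset (Fin (k + 1) → V)}
    {X : Finset V} (hX : ∀ w ∈ T, ¬Disjoint X (walkInterior w))
    (hB : ∀ x ∈ X, ∀ p ∈ Ioo 0 (Fin.last k), #{w ∈ T | w p = x} ≤ B) :
    #T ≤ #X * (k - 1) * B := by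
  have hT : T ⊆ (X ×ˢ Ioo 0 (Fin.last k)).biUnion fun q => {w ∈ T | w q.2 = q.1} := by
    intro w hw
    obtain ⟨x, hxX, hxw⟩ := not_disjoint_iff.1 (hX w hw)
    obtain ⟨p, hp, rfl⟩ := mem_image.1 hxw
    exact mem_biUnion.2 ⟨(w p, p), mem_product.2 ⟨hxX, hp⟩, mem_filter.2 ⟨hw, rfl⟩⟩
  calc #T ≤ #(X ×ˢ Ioo 0 (Fin.last k)) * B :=
        (card_le_card hT).trans <| card_biUnion_le_card_mul _ _ _ fun q hq =>
          hB q.1 (mem_product.1 hq).1 q.2 (mem_product.1 hq).2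
    _ = #X * (k - 1) * B := by simp [card_product, Fin.card_Ioo]

end Interior

section Disperser

variable {U ι : Type*} [Fintype U] [DecidableEq U] [DecidableEq ι] {S : ι → Finset U}
  {f : ι → U → Bool} {r ℓ : ℕ} {ζ : ℝ} {Eb : ι → ι → Prop}

lemma not_pairwise_disjoint_walkInterior (hdisp : IsDisperser S r ℓ ζ)
    (hEb : ∀ i j, Eb i j → disa S f i j = 0) {k : ℕ} (hk : 2 ≤ k) (hkℓ : k ≤ ℓ + 1) {u v : ι}
    (huv : ζ * (Fintype.card U : ℝ) < (disa S f u v : ℝ)) (W : Fin r → Fin (k + 1) → ι)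
    (hW : ∀ a, IsBlueWalk Eb (W a) ∧ W a 0 = u ∧ W a (Fin.last k) = v) :
    ¬Pairwise fun a b => Disjoint (walkInterior (W a)) (walkInterior (W b)) := by
  intro hdisj
  have hcover := hdisp (fun a => walkInterior (W a)) (fun a => walkInterior_nonempty _ hk)
    (fun a => (card_walkInterior_le _).trans (by omega)) hdisj
  obtain ⟨x, hx⟩ := inter_nonempty_of_card_lt_card_add_card
    (subset_univ {x ∈ S u ∩ S v | f u x ≠ f v x})
    (subset_univ (univ.sup fun a => (walkInterior (W a)).inf S))
    (by
      rw [card_univ]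
      have : (Fintype.card U : ℝ) <
          disa S f u v + #(univ.sup fun a => (walkInterior (W a)).inf S) := by linarith
      exact_mod_cast this)
  obtain ⟨hxD, hxG⟩ := mem_inter.1 hx
  obtain ⟨a, -, hxa⟩ := mem_sup.1 hxG
  obtain ⟨hxuv, hne⟩ := mem_filter.1 hxD
  obtain ⟨hb, h0, hl⟩ := hW a
  rw [← h0, ← hl] at hxuv hne
  exact hne <| hb.apply_zero_eq_apply_last S f hEb <|
    mem_of_mem_inf_walkInterior S hxa (mem_inter.1 hxuv).1 (mem_inter.1 hxuv).2

end Disperser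

section Counting

variable {U ι : Type*} [Fintype U] [DecidableEq U] [Fintype ι] {S : ι → Finset U}
  {f : ι → U → Bool} {r ℓ : ℕ} {ζ : ℝ} {Er Eb : ι → ι → Prop}

theorem card_redFilledWalkFinset_le (hdisp : IsDisperser S r ℓ ζ)
    (hEr : ∀ i j, Er i j → ζ * (Fintype.card U : ℝ) < (disa S f i j : ℝ))
    (hEb : ∀ i j, Eb i j → disa S f i j = 0) (k : ℕ) (hkℓ : k ≤ ℓ) (u v : ι) :
    #(redFilledWalkFinset Er Eb k u v) ≤ (r * ℓ) ^ (2 * (k - 1)) := by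
  classical
  induction k using Nat.strong_induction_on generalizing u v with
  | _ k ih =>
  rcases le_or_gt k 1 with hk | hk
  · simpa [Nat.sub_eq_zero_of_le hk] using card_redFilledWalkFinset_le_one hk u v
  set T := redFilledWalkFinset Er Eb k u v
  rcases T.eq_empty_or_nonempty with hT | ⟨w₀, hw₀⟩
  · simp [hT]
  have huv : ζ * (Fintype.card U : ℝ) < disa S f u v := by
    obtain ⟨-, hr, h0, hl⟩ := mem_redFilledWalkFinset.1 hw₀
    simpa [h0, hl] using hEr _ _ (hr.rel_zero_last hk)
  obtain ⟨W, hWT, hW⟩ | ⟨X, hX, hXT⟩ :=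
    exists_pairwise_disjoint_or_exists_hittingSet walkInterior card_walkInterior_le r T
  · refine absurd hW (not_pairwise_disjoint_walkInterior hdisp hEb hk (by omega) huv W ?_)
    intro a
    obtain ⟨hb, -, h0, hl⟩ := mem_redFilledWalkFinset.1 (hWT a)
    exact ⟨hb, h0, hl⟩
  have hfibre : ∀ p ∈ Ioo 0 (Fin.last k), ∀ x,
      #{w ∈ T | w p = x} ≤ (r * ℓ) ^ (2 * (k - 2)) := by
    intro p hp x
    rw [mem_Ioo] at hp
    simp only [Fin.lt_def, Fin.val_zero, Fin.val_last] at hp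
    calc #{w ∈ T | w p = x}
        ≤ #(redFilledWalkFinset Er Eb p u x) *
            #(redFilledWalkFinset Er Eb (k - p) x v) := card_filter_apply_eq_le u v x p
      _ ≤ (r * ℓ) ^ (2 * ((p : ℕ) - 1)) * (r * ℓ) ^ (2 * (k - p - 1)) :=
          Nat.mul_le_mul (ih p (by omega) (by omega) u x) (ih (k - p) (by omega) (by omega) x v)
      _ = (r * ℓ) ^ (2 * (k - 2)) := by rw [← pow_add]; congr 1; omega
  calc #T
      ≤ #X * (k - 1) * (r * ℓ) ^ (2 * (k - 2)) :=
        card_le_of_forall_not_disjoint_walkInterior hXT fun x _ p hp => hfibre p hp x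
    _ ≤ (r * ℓ) * (r * ℓ) * (r * ℓ) ^ (2 * (k - 2)) := by
        refine Nat.mul_le_mul_right _ ?_
        calc #X * (k - 1) ≤ (r * r) * (ℓ * ℓ) := by
              grw [hX, mul_assoc]; gcongr; exacts [Nat.le_mul_self r, by omega, by omega]
          _ = r * ℓ * (r * ℓ) := by ring
    _ = (r * ℓ) ^ (2 * (k - 1)) := by rw [← sq, ← pow_add]; congr 1; omega

end Counting

theorem stmt2_general {U ι : Type*} [Fintype U] [DecidableEq U] [Fintype ι]
    (S : ι → Finset U) (f : ι → U → Bool) (r ℓ : ℕ) (ζ : ℝ)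
    (hdisp : IsDisperser S r ℓ ζ) :
    ∀ u v : ι, u ≠ v → ζ * (Fintype.card U : ℝ) < (disa S f u v : ℝ) →
      (RedFilledWalks
          (fun i j => i ≠ j ∧ ζ * (Fintype.card U : ℝ) < (disa S f i j : ℝ))
          (fun i j => i ≠ j ∧ disa S f i j = 0) ℓ u v).ncard ≤ (r * ℓ) ^ (2 * (ℓ - 1)) := by
  intro u v _ _
  rw [ncard_redFilledWalks]
  exact card_redFilledWalkFinset_le hdisp (fun _ _ h => h.2) (fun _ _ h => h.2) ℓ le_rfl u v

/-- If `S` is an `(r, ℓ, ζ)`-intersection disperser with `ℓ ≥ 2`, then for any collection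
of local functions `f`, the two-level consistency graph `G^{F,ζ}` (blue edges = consistent
pairs, red edges = `ζ`-inconsistent pairs) is `((rℓ)^{2(ℓ-1)}, ℓ)`-red/blue-transitive:
for every red edge `{u, v}` there are at most `(rℓ)^{2(ℓ-1)}` red-filled `ℓ`-walks from
`u` to `v`. -/
theorem stmt2 {U ι : Type*} [Fintype U] [DecidableEq U] [Fintype ι] [DecidableEq ι]
    (S : ι → Finset U) (f : ι → U → Bool) (r ℓ : ℕ) (ζ : ℝ)
    (hζ0 : 0 ≤ ζ) (hζ1 : ζ ≤ 1) (hℓ : 2 ≤ ℓ)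
    (hdisp : IsDisperser S r ℓ ζ) :
    ∀ u v : ι, u ≠ v → ζ * (Fintype.card U : ℝ) < (disa S f u v : ℝ) →
      (RedFilledWalks
          (fun i j => i ≠ j ∧ ζ * (Fintype.card U : ℝ) < (disa S f i j : ℝ))
          (fun i j => i ≠ j ∧ disa S f i j = 0) ℓ u v).ncard ≤ (r * ℓ) ^ (2 * (ℓ - 1)) :=
  stmt2_general S f r ℓ ζ hdisp
end

section
/- Let U be a universe of size n, let S' be a finite collection of subsets of U, and let F = {f_S}_{S∈S'} be a collection of functions f_S : S → {0,1} such that agr_{ζ'}(F) ≥ 1 − κ. Define g : U → {0,1} by letting g(x) be a majority value of the multiset {f_S(x) : S ∈ S', x ∈ S} (arbitrarily when this multiset is empty or tied). Then E_{S∈S'}[disa(g, f_S)] ≤ n·√(κ + ζ'), where S is uniform over the collection. -/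
open Finset

set_option maxHeartbeats 1000000

/-- `disaG S f g i`: the number of elements `x ∈ S i` on which the global function `g`
and the local function `f i` disagree. -/
def disaG {U ι : Type*} (S : ι → Finset U) (f : ι → U → Bool) (g : U → Bool) (i : ι) : ℕ :=
  ((S i).filter fun x => g x ≠ f i x).card

/-- Majority decoding: if `agr_{ζ'}(F) ≥ 1 − κ` for a collection `F` of local functions,
and `g` is obtained by taking pointwise majority of the local functions, then
`E_{S∈S'}[disa(g, f_S)] ≤ n·√(κ + ζ')`. The majority property of `g` is expressed by the
hypothesis that at each point `x`, at least half of the local functions defined at `x`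
agree with `g(x)`. -/
theorem stmt8 {U ι : Type*} [Fintype U] [DecidableEq U] [Fintype ι] [Nonempty ι]
    (S : ι → Finset U) (f : ι → U → Bool) (ζ' κ : ℝ) (hζ' : 0 ≤ ζ') (hκ : 0 ≤ κ)
    (hagr : (1 - κ) * (Fintype.card ι : ℝ) ^ 2 ≤
      ({p : ι × ι | (disa S f p.1 p.2 : ℝ) ≤ ζ' * (Fintype.card U : ℝ)}.ncard : ℝ))
    (g : U → Bool)
    (hmaj : ∀ x : U,
      {i : ι | x ∈ S i ∧ f i x ≠ g x}.ncard ≤ {i : ι | x ∈ S i ∧ f i x = g x}.ncard) :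
    (∑ i : ι, (disaG S f g i : ℝ)) / (Fintype.card ι : ℝ) ≤
      (Fintype.card U : ℝ) * Real.sqrt (κ + ζ') := by
  classical
  set n : ℝ := (Fintype.card U : ℝ) with hn
  set m : ℝ := (Fintype.card ι : ℝ) with hm
  have hn0 : (0:ℝ) ≤ n := by positivity
  have hm0 : (0:ℝ) < m := by rw [hm]; exact_mod_cast Fintype.card_pos (α := ι)
  set B : U → Finset ι := fun x => univ.filter fun i => x ∈ S i ∧ f i x ≠ g x with hB
  set A : U → Finset ι := fun x => univ.filter fun i => x ∈ S i ∧ f i x = g x with hA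
  have hBA : ∀ x, (B x).card ≤ (A x).card := by
    intro x
    have h := hmaj x
    have e1 : {i : ι | x ∈ S i ∧ f i x ≠ g x} = ↑(B x) := by ext i; simp [hB]
    have e2 : {i : ι | x ∈ S i ∧ f i x = g x} = ↑(A x) := by ext i; simp [hA]
    rwa [e1, e2, Set.ncard_coe_finset, Set.ncard_coe_finset] at h
  -- Step 1: sum of disaG equals sum of |B x|
  have h1 : ∑ i : ι, disaG S f g i = ∑ x : U, (B x).card := by
    have hfe : ∀ i, disaG S f g i
        = ∑ x : U, (if x ∈ S i ∧ f i x ≠ g x then 1 else 0) := by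
      intro i
      rw [disaG, show (S i).filter (fun x => g x ≠ f i x)
          = univ.filter (fun x => x ∈ S i ∧ f i x ≠ g x) by
        ext x; simp [ne_comm]]
      exact card_filter _ _
    simp only [hfe, hB, card_filter]
    exact Finset.sum_comm
  -- Step 2
  have h2 : ∑ x : U, (B x).card * (A x).card ≤ ∑ p : ι × ι, disa S f p.1 p.2 := by
    have hfe : ∀ p : ι × ι, disa S f p.1 p.2
        = ∑ x : U, (if x ∈ S p.1 ∧ x ∈ S p.2 ∧ f p.1 x ≠ f p.2 x then 1 else 0) := by
      intro p
      rw [disa, show (S p.1 ∩ S p.2).filter (fun x => f p.1 x ≠ f p.2 x)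
          = univ.filter (fun x => x ∈ S p.1 ∧ x ∈ S p.2 ∧ f p.1 x ≠ f p.2 x) by
        ext x; simp [and_assoc]]
      exact card_filter _ _
    simp only [hfe]
    rw [Finset.sum_comm]
    refine Finset.sum_le_sum fun x _ => ?_
    have : ∑ p : ι × ι, (if x ∈ S p.1 ∧ x ∈ S p.2 ∧ f p.1 x ≠ f p.2 x then 1 else 0)
        = ((univ : Finset (ι × ι)).filter
            fun p => x ∈ S p.1 ∧ x ∈ S p.2 ∧ f p.1 x ≠ f p.2 x).card :=
      (card_filter _ _).symm
    rw [this, ← Finset.card_product]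
    refine Finset.card_le_card ?_
    intro p hp
    simp only [Finset.mem_product, hB, hA, mem_filter, mem_univ, true_and] at hp
    simp only [mem_filter, mem_univ, true_and]
    obtain ⟨⟨h1a, h1b⟩, h2a, h2b⟩ := hp
    exact ⟨h1a, h2a, by rw [h2b]; exact h1b⟩
  -- Step 3: upper bound on total pairwise disagreement
  have h3 : ∑ p : ι × ι, (disa S f p.1 p.2 : ℝ) ≤ (κ + ζ') * n * m ^ 2 := by
    set T := (univ : Finset (ι × ι)).filter
      (fun p => (disa S f p.1 p.2 : ℝ) ≤ ζ' * n) with hT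
    set Tc := (univ : Finset (ι × ι)).filter
      (fun p => ¬ (disa S f p.1 p.2 : ℝ) ≤ ζ' * n) with hTc
    have hTcard : (1 - κ) * m ^ 2 ≤ (T.card : ℝ) := by
      have e : {p : ι × ι | (disa S f p.1 p.2 : ℝ) ≤ ζ' * n} = ↑T := by
        ext p; simp [hT]
      rw [e, Set.ncard_coe_finset] at hagr
      exact hagr
    have hdn : ∀ p : ι × ι, (disa S f p.1 p.2 : ℝ) ≤ n := by
      intro p
      have : disa S f p.1 p.2 ≤ Fintype.card U := by
        rw [disa]
        exact le_trans (card_filter_le _ _)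
          (le_trans (card_le_card inter_subset_left) (card_le_univ _))
      rw [hn]; exact_mod_cast this
    have hsplit := Finset.sum_filter_add_sum_filter_not (univ : Finset (ι × ι))
      (fun p => (disa S f p.1 p.2 : ℝ) ≤ ζ' * n) (fun p => (disa S f p.1 p.2 : ℝ))
    have hcards : (T.card : ℝ) + (Tc.card : ℝ) = m ^ 2 := by
      have := Finset.card_filter_add_card_filter_not
        (s := (univ : Finset (ι × ι))) (p := fun p => (disa S f p.1 p.2 : ℝ) ≤ ζ' * n)
      have hcu : (univ : Finset (ι × ι)).card = Fintype.card ι * Fintype.card ι := by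
        simp [Fintype.card_prod]
      rw [hcu] at this
      rw [hm, sq, ← Nat.cast_mul, ← this, hT, hTc]
      push_cast
      ring
    have hb1 : ∑ p ∈ T, (disa S f p.1 p.2 : ℝ) ≤ (T.card : ℝ) * (ζ' * n) := by
      have := Finset.sum_le_card_nsmul T (fun p => (disa S f p.1 p.2 : ℝ)) (ζ' * n)
        (fun p hp => (mem_filter.mp hp).2)
      rwa [nsmul_eq_mul] at this
    have hb2 : ∑ p ∈ Tc, (disa S f p.1 p.2 : ℝ) ≤ (Tc.card : ℝ) * n := by
      have := Finset.sum_le_card_nsmul Tc (fun p => (disa S f p.1 p.2 : ℝ)) n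
        (fun p _ => hdn p)
      rwa [nsmul_eq_mul] at this
    have hNc0 : (0:ℝ) ≤ (Tc.card : ℝ) := Nat.cast_nonneg _
    have hTle : (T.card : ℝ) ≤ m ^ 2 := by linarith
    have hNle : (Tc.card : ℝ) ≤ κ * m ^ 2 := by linarith
    calc ∑ p : ι × ι, (disa S f p.1 p.2 : ℝ)
        = ∑ p ∈ T, (disa S f p.1 p.2 : ℝ)
          + ∑ p ∈ Tc, (disa S f p.1 p.2 : ℝ) := hsplit.symm
      _ ≤ (T.card : ℝ) * (ζ' * n) + (Tc.card : ℝ) * n := add_le_add hb1 hb2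
      _ ≤ m ^ 2 * (ζ' * n) + (κ * m ^ 2) * n := by
          exact add_le_add (mul_le_mul_of_nonneg_right hTle (by positivity))
            (mul_le_mul_of_nonneg_right hNle hn0)
      _ = (κ + ζ') * n * m ^ 2 := by ring
  -- Combine: sum of squares bound
  have h4 : ∑ x : U, ((B x).card : ℝ) ^ 2 ≤ (κ + ζ') * n * m ^ 2 := by
    refine le_trans ?_ h3
    have h2' : (∑ x : U, ((B x).card : ℝ) * ((A x).card : ℝ))
        ≤ ∑ p : ι × ι, (disa S f p.1 p.2 : ℝ) := by exact_mod_cast h2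
    refine le_trans (Finset.sum_le_sum fun x _ => ?_) h2'
    have hba := (Nat.cast_le (α := ℝ)).mpr (hBA x)
    rw [sq]
    exact mul_le_mul_of_nonneg_left hba (Nat.cast_nonneg _)
  -- Cauchy-Schwarz
  set D : ℝ := ∑ x : U, ((B x).card : ℝ) with hD
  have hD0 : 0 ≤ D := Finset.sum_nonneg fun x _ => Nat.cast_nonneg _
  have hCS : D ^ 2 ≤ n * ∑ x : U, ((B x).card : ℝ) ^ 2 := by
    have := Finset.sum_mul_sq_le_sq_mul_sq (univ : Finset U)
      (fun _ => (1:ℝ)) (fun x => ((B x).card : ℝ))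
    simp only [one_mul, one_pow, Finset.sum_const, card_univ, nsmul_eq_mul, mul_one] at this
    exact this
  have hkz : (0:ℝ) ≤ κ + ζ' := by linarith
  have hC0 : (0:ℝ) ≤ n * Real.sqrt (κ + ζ') * m := by positivity
  have hD2 : D ^ 2 ≤ (n * Real.sqrt (κ + ζ') * m) ^ 2 := by
    have hs : Real.sqrt (κ + ζ') ^ 2 = κ + ζ' := Real.sq_sqrt hkz
    calc D ^ 2 ≤ n * ∑ x : U, ((B x).card : ℝ) ^ 2 := hCS
      _ ≤ n * ((κ + ζ') * n * m ^ 2) := mul_le_mul_of_nonneg_left h4 hn0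
      _ = (n * Real.sqrt (κ + ζ') * m) ^ 2 := by rw [mul_pow, mul_pow, hs]; ring
  have hDle : D ≤ n * Real.sqrt (κ + ζ') * m := by
    have := Real.sqrt_le_sqrt hD2
    rwa [Real.sqrt_sq hD0, Real.sqrt_sq hC0] at this
  have h1' : (∑ i : ι, (disaG S f g i : ℝ)) = D := by
    rw [hD]
    exact_mod_cast congrArg (Nat.cast : ℕ → ℝ) h1
  rw [h1', div_le_iff₀ hm0]
  linarith
end

section
/- For any 0 < α, μ < 1 and m, k ∈ ℕ, let S₁, …, S_k be independent random subsets of an m-element universe U, where each element of U is included in each S_i independently with probability α. Then with probability at least 1 − 2^{(log₂ k)·⌈8·ln(2/μ)/α⌉ − μ²m/16}, every subcollection of {S₁,…,S_k} of size ⌈8·ln(2/μ)/α⌉ is (α/2, μ)-uniform. -/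
/-!
Union bound over the `C(k, t) ≤ k^t` subcollections `I` of size `t = ⌈8 ln(2/μ)/α⌉`. For a
fixed `I`, the number of sets of `I` containing a given element is binomial with mean
`α t ≥ 8 ln(2/μ)`, so by a Chernoff bound (exponent `-1`) it falls below `α t/2` with
probability at most `exp(-α t/8) ≤ μ/2`. These events are independent across the elements, so a
second Chernoff bound (exponent `ln 2`) shows that more than `μ m` elements are bad with
probability at most `2^{-μ m} e^{μ m/2} ≤ 2^{-μ² m/16}`.
-/

open Finset

/-- `IsUniformOn S I γ μ`: the subcollection of `S` indexed by `I` is `(γ, μ)`-uniform. -/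
def IsUniformOn {U ι : Type*} [Fintype U] (S : ι → Finset U) (I : Finset ι) (γ μ : ℝ) :
    Prop :=
  (1 - μ) * (Fintype.card U : ℝ) ≤
    ({u : U | γ * (I.card : ℝ) ≤ ({i : ι | i ∈ I ∧ u ∈ S i}.ncard : ℝ)}.ncard : ℝ)

/-- The probability of the event `E` when `k` subsets of the finite universe `U` are drawn
independently, each element being included in each subset independently with probability
`α`. An outcome `ω : Fin k → U → Bool` records, for each subset index `i` and element `u`,
whether `u` is included in the `i`-th subset. -/
noncomputable def prSets {U : Type*} [Fintype U] [DecidableEq U] (k : ℕ) (α : ℝ)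
    (E : Set (Fin k → U → Bool)) : ℝ :=
  ∑ ω : Fin k → U → Bool,
    E.indicator (fun ω => ∏ i : Fin k, ∏ u : U, cond (ω i u) α (1 - α)) ω

/-- The `i`-th random subset determined by the outcome `ω`. -/
def subsetOf {U : Type*} [Fintype U] {k : ℕ} (ω : Fin k → U → Bool) (i : Fin k) :
    Finset U :=
  Finset.univ.filter fun u => ω i u

open Real

section ProductWeights

variable {ι : Type*} [Fintype ι] [DecidableEq ι] {κ : ι → Type*} [∀ i, Fintype (κ i)]

theorem sum_prod_eq_one {w : ∀ i, κ i → ℝ} (hw : ∀ i, ∑ x, w i x = 1) :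
    ∑ ω : ∀ i, κ i, ∏ i, w i (ω i) = 1 := by
  rw [← Fintype.prod_sum w]
  simp [hw]

theorem mul_sum_prod_le_prod_sum_mul {w g : ∀ i, κ i → ℝ} (hw : ∀ i x, 0 ≤ w i x)
    (hg : ∀ i x, 0 ≤ g i x) {c : ℝ} {E : Finset (∀ i, κ i)}
    (hE : ∀ ω ∈ E, c ≤ ∏ i, g i (ω i)) :
    c * ∑ ω ∈ E, ∏ i, w i (ω i) ≤ ∏ i, ∑ x, g i x * w i x := by
  have hW : ∀ ω : ∀ i, κ i, 0 ≤ ∏ i, w i (ω i) := fun ω => prod_nonneg fun i _ => hw i _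
  calc c * ∑ ω ∈ E, ∏ i, w i (ω i)
      ≤ ∑ ω ∈ E, (∏ i, g i (ω i)) * ∏ i, w i (ω i) := by
        rw [mul_sum]
        exact sum_le_sum fun ω hω => mul_le_mul_of_nonneg_right (hE ω hω) (hW ω)
    _ ≤ ∑ ω : ∀ i, κ i, (∏ i, g i (ω i)) * ∏ i, w i (ω i) :=
        sum_le_sum_of_subset_of_nonneg (subset_univ E) fun ω _ _ =>
          mul_nonneg (prod_nonneg fun i _ => hg i _) (hW ω)
    _ = ∏ i, ∑ x, g i x * w i x := by
        simp_rw [← prod_mul_distrib]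
        exact (Fintype.prod_sum fun i x => g i x * w i x).symm

theorem sum_ite_mul_of_sum_eq_one {β : Type*} [Fintype β] {w : β → ℝ} (hw : ∑ x, w x = 1)
    (P : β → Prop) [DecidablePred P] (a : ℝ) :
    ∑ x, (if P x then a else 1) * w x = 1 + (a - 1) * ∑ x with P x, w x := by
  calc ∑ x, (if P x then a else 1) * w x = ∑ x, (w x + if P x then (a - 1) * w x else 0) := by
        refine sum_congr rfl fun x _ => ?_
        split_ifs <;> ring
    _ = 1 + (a - 1) * ∑ x with P x, w x := by rw [sum_add_distrib, hw, mul_sum, sum_filter]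

/-- Chernoff bound for the number of the independent events `P i (ω i)` that occur. -/
theorem sum_prod_le_exp_of_le_mul_card {w : ∀ i, κ i → ℝ} (hw0 : ∀ i x, 0 ≤ w i x)
    (hw1 : ∀ i, ∑ x, w i x = 1) (P : ∀ i, κ i → Prop) [∀ i, DecidablePred (P i)]
    {θ s : ℝ} {E : Finset (∀ i, κ i)} (hE : ∀ ω ∈ E, s ≤ θ * #{i | P i (ω i)}) :
    ∑ ω ∈ E, ∏ i, w i (ω i) ≤ exp (-s + (exp θ - 1) * ∑ i, ∑ x with P i x, w i x) := by
  have hmarkov := mul_sum_prod_le_prod_sum_mul (g := fun i x => if P i x then exp θ else 1)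
    hw0 (fun i x => by positivity) (c := exp s) (E := E) fun ω hω => by
      rw [prod_ite, prod_const, prod_const_one, mul_one, ← exp_nat_mul, mul_comm]
      exact exp_le_exp.mpr (hE ω hω)
  have hfactor : ∀ i, ∑ x, (if P i x then exp θ else 1) * w i x
      ≤ exp ((exp θ - 1) * ∑ x with P i x, w i x) := fun i => by
    rw [sum_ite_mul_of_sum_eq_one (hw1 i)]
    linarith [add_one_le_exp ((exp θ - 1) * ∑ x with P i x, w i x)]
  have hprod := prod_le_prod (s := univ) (fun i _ => sum_nonneg fun x _ =>
    mul_nonneg (by positivity) (hw0 i x)) fun i _ => hfactor i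
  rw [← exp_sum, ← mul_sum] at hprod
  rw [exp_add, exp_neg, ← div_eq_inv_mul, le_div_iff₀ (exp_pos s), mul_comm]
  exact hmarkov.trans hprod

end ProductWeights

theorem exp_neg_one_le_three_eighths : exp (-1) ≤ 3 / 8 := by
  rw [exp_neg, inv_le_comm₀ (exp_pos 1) (by norm_num)]
  linarith [exp_one_gt_d9]

theorem exp_sub_le_two_rpow {μ : ℝ} (hμ0 : 0 ≤ μ) (hμ1 : μ ≤ 1) {n : ℝ} (hn : 0 ≤ n) :
    exp (-(log 2 * (μ * n)) + μ / 2 * n) ≤ (2 : ℝ) ^ (-(μ ^ 2 * n / 16)) := by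
  rw [rpow_def_of_pos two_pos, exp_le_exp]
  have hlog := log_two_gt_d9
  have hμn : 0 ≤ μ * n := mul_nonneg hμ0 hn
  nlinarith [mul_nonneg hμn (sub_nonneg.mpr hμ1)]

section Bernoulli

theorem cond_nonneg {α : ℝ} (hα0 : 0 ≤ α) (hα1 : α ≤ 1) (b : Bool) : 0 ≤ cond b α (1 - α) := by
  cases b <;> simp only [cond_true, cond_false] <;> linarith

theorem sum_cond_eq_one (α : ℝ) : ∑ b : Bool, cond b α (1 - α) = 1 := by
  simp

variable {ι : Type*} [Fintype ι] [DecidableEq ι]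

theorem sum_prod_cond_card_lt_half_le {α : ℝ} (hα0 : 0 ≤ α) (hα1 : α ≤ 1) (I : Finset ι) :
    ∑ φ : ι → Bool with #{i | i ∈ I ∧ φ i = true} < α / 2 * #I, ∏ i, cond (φ i) α (1 - α)
      ≤ exp (-(α * #I / 8)) := by
  have hmean : ∑ i, ∑ b : Bool with i ∈ I ∧ b = true, cond b α (1 - α) = α * #I := by
    simp [sum_filter, sum_ite_mem, mul_comm]
  refine (sum_prod_le_exp_of_le_mul_card (κ := fun _ => Bool) (fun _ => cond_nonneg hα0 hα1)
    (fun _ => sum_cond_eq_one α) (fun i b => i ∈ I ∧ b = true) (θ := -1)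
    (s := -(α / 2 * #I)) fun φ hφ => ?_).trans ?_
  · rw [mem_filter] at hφ
    linarith [hφ.2]
  · rw [hmean, exp_le_exp]
    nlinarith [exp_neg_one_le_three_eighths, mul_nonneg hα0 (#I).cast_nonneg]

end Bernoulli

section RandomSets

variable {U : Type*} [Fintype U] {k : ℕ}

theorem isUniformOn_subsetOf_iff (ω : Fin k → U → Bool) (I : Finset (Fin k)) (γ μ : ℝ) :
    IsUniformOn (subsetOf ω) I γ μ ↔
      (1 - μ) * Fintype.card U ≤ #{u | γ * #I ≤ #{i | i ∈ I ∧ ω i u = true}} := by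
  have hcount : ∀ u, {i | i ∈ I ∧ u ∈ subsetOf ω i}.ncard = #{i | i ∈ I ∧ ω i u = true} :=
    fun u => by
      rw [← Set.ncard_coe_finset]
      simp [subsetOf]
  simp only [IsUniformOn, hcount, Set.ncard_eq_toFinset_card', Set.toFinset_ofPred]

variable [DecidableEq U]

theorem prSets_eq_sum_transpose (α : ℝ) (E : Set (Fin k → U → Bool)) [DecidablePred (· ∈ E)] :
    prSets k α E = ∑ ψ : U → Fin k → Bool with (fun i u => ψ u i) ∈ E,
      ∏ u, ∏ i, cond (ψ u i) α (1 - α) := by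
  rw [prSets, sum_filter, ← (Equiv.piComm fun (_ : U) (_ : Fin k) => Bool).sum_comp]
  refine sum_congr rfl fun ψ _ => ?_
  rw [Set.indicator_apply, prod_comm]
  rfl

theorem prSets_add_prSets_compl (α : ℝ) (E : Set (Fin k → U → Bool)) :
    prSets k α E + prSets k α Eᶜ = 1 := by
  rw [prSets, prSets, ← sum_add_distrib]
  simp only [Set.indicator_self_add_compl_apply]
  exact sum_prod_eq_one (κ := fun _ => U → Bool) fun _ =>
    sum_prod_eq_one (κ := fun _ => Bool) fun _ => sum_cond_eq_one α

theorem prSets_le_sum_of_subset_biUnion {α : ℝ} (hα0 : 0 ≤ α) (hα1 : α ≤ 1) {κ : Type*}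
    {E : Set (Fin k → U → Bool)} {s : Finset κ} {F : κ → Set (Fin k → U → Bool)}
    (hE : E ⊆ ⋃ j ∈ s, F j) : prSets k α E ≤ ∑ j ∈ s, prSets k α (F j) := by
  have hf : ∀ ω : Fin k → U → Bool, 0 ≤ ∏ i, ∏ u, cond (ω i u) α (1 - α) := fun ω =>
    prod_nonneg fun i _ => prod_nonneg fun u _ => cond_nonneg hα0 hα1 _
  simp only [prSets]
  rw [sum_comm]
  refine sum_le_sum fun ω _ => ?_
  by_cases hω : ω ∈ E
  · obtain ⟨j, hj, hωj⟩ := Set.mem_iUnion₂.mp (hE hω)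
    calc _ = (F j).indicator _ ω := by rw [Set.indicator_of_mem hω, Set.indicator_of_mem hωj]
      _ ≤ _ := single_le_sum (fun j _ => Set.indicator_nonneg (fun ω _ => hf ω) ω) hj
  · rw [Set.indicator_of_notMem hω]
    exact sum_nonneg fun j _ => Set.indicator_nonneg (fun ω _ => hf ω) ω

theorem prSets_not_isUniformOn_le {α μ : ℝ} (hα0 : 0 ≤ α) (hα1 : α ≤ 1) (hμ0 : 0 < μ)
    (hμ1 : μ ≤ 1) {I : Finset (Fin k)} (hI : 8 * log (2 / μ) ≤ α * #I) :
    prSets (U := U) k α {ω | ¬IsUniformOn (subsetOf ω) I (α / 2) μ}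
      ≤ (2 : ℝ) ^ (-(μ ^ 2 * Fintype.card U / 16)) := by
  have hcolumn : ∑ φ : Fin k → Bool with #{i | i ∈ I ∧ φ i = true} < α / 2 * #I,
      ∏ i, cond (φ i) α (1 - α) ≤ μ / 2 := by
    refine (sum_prod_cond_card_lt_half_le hα0 hα1 I).trans ?_
    calc exp (-(α * #I / 8)) ≤ exp (-log (2 / μ)) := exp_le_exp.mpr (by linarith)
      _ = μ / 2 := by rw [exp_neg, exp_log (by positivity), inv_div]
  classical
  rw [prSets_eq_sum_transpose]
  refine (sum_prod_le_exp_of_le_mul_card (κ := fun _ => Fin k → Bool)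
    (fun _ φ => prod_nonneg fun i _ => cond_nonneg hα0 hα1 (φ i))
    (fun _ => sum_prod_eq_one (κ := fun _ => Bool) fun _ => sum_cond_eq_one α)
    (fun _ φ => #{i | i ∈ I ∧ φ i = true} < α / 2 * #I) (θ := log 2)
    (s := log 2 * (μ * Fintype.card U)) fun ψ hψ => ?_).trans ?_
  · have hbad := (mem_filter.mp hψ).2
    rw [Set.mem_ofPred_eq, isUniformOn_subsetOf_iff, not_le] at hbad
    have hsplit := card_filter_add_card_filter_not (s := univ)
      (fun u => α / 2 * #I ≤ #{i | i ∈ I ∧ ψ u i = true})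
    simp only [not_le, card_univ] at hsplit
    have hn : (Fintype.card U : ℝ) = _ := congrArg (Nat.cast (R := ℝ)) hsplit.symm
    push_cast at hn
    have := log_pos one_lt_two
    nlinarith
  · have hmean : ∑ u : U, ∑ φ : Fin k → Bool with #{i | i ∈ I ∧ φ i = true} < α / 2 * #I,
        ∏ i, cond (φ i) α (1 - α) ≤ μ / 2 * Fintype.card U := by
      calc _ ≤ ∑ _u : U, μ / 2 := sum_le_sum fun _ _ => hcolumn
        _ = μ / 2 * Fintype.card U := by rw [sum_const, card_univ, nsmul_eq_mul, mul_comm]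
    rw [exp_log two_pos]
    refine (exp_le_exp.mpr ?_).trans (exp_sub_le_two_rpow hμ0.le hμ1 (Fintype.card U).cast_nonneg)
    linarith

end RandomSets

theorem natCast_pow_le_two_rpow_logb_mul (k t : ℕ) :
    (k : ℝ) ^ t ≤ (2 : ℝ) ^ (logb 2 k * t) := by
  rcases k.eq_zero_or_pos with rfl | hk
  · rcases t.eq_zero_or_pos with rfl | ht
    · simp
    · rw [Nat.cast_zero, zero_pow ht.ne']
      positivity
  · rw [rpow_mul zero_le_two, rpow_logb two_pos (by norm_num) (by exact_mod_cast hk),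
      rpow_natCast]

/-- For random subsets `S₁, …, S_k` of an `m`-element universe, each including each
element independently with probability `α`, with probability at least
`1 − 2^{(log₂ k)·⌈8·ln(2/μ)/α⌉ − μ²m/16}` every subcollection of size `⌈8·ln(2/μ)/α⌉` is
`(α/2, μ)`-uniform. -/
theorem stmt16 {U : Type*} [Fintype U] [DecidableEq U] (m k : ℕ) (hU : Fintype.card U = m)
    (α μ : ℝ) (hα0 : 0 < α) (hα1 : α < 1) (hμ0 : 0 < μ) (hμ1 : μ < 1) :
    1 - (2 : ℝ) ^ (Real.logb 2 (k : ℝ) * (⌈8 * Real.log (2 / μ) / α⌉₊ : ℝ) -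
        μ ^ 2 * (m : ℝ) / 16) ≤
      prSets (U := U) k α
        {ω | ∀ I : Finset (Fin k), I.card = ⌈8 * Real.log (2 / μ) / α⌉₊ →
          IsUniformOn (subsetOf ω) I (α / 2) μ} := by
  set t := ⌈8 * log (2 / μ) / α⌉₊
  set E := {ω : Fin k → U → Bool | ∀ I : Finset (Fin k), #I = t →
    IsUniformOn (subsetOf ω) I (α / 2) μ}
  have hunion : prSets k α Eᶜ ≤ ∑ I ∈ powersetCard t univ,
      prSets (U := U) k α {ω | ¬IsUniformOn (subsetOf ω) I (α / 2) μ} :=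
    prSets_le_sum_of_subset_biUnion hα0.le hα1.le fun ω hω => by
      obtain ⟨I, hIt, hbad⟩ := not_forall₂.mp (hω : ω ∉ E)
      exact Set.mem_iUnion₂.mpr ⟨I, mem_powersetCard_univ.mpr hIt, hbad⟩
  have hfixed : ∀ I ∈ powersetCard t (univ : Finset (Fin k)),
      prSets (U := U) k α {ω | ¬IsUniformOn (subsetOf ω) I (α / 2) μ}
        ≤ (2 : ℝ) ^ (-(μ ^ 2 * m / 16)) := fun I hI => by
    rw [← hU]
    refine prSets_not_isUniformOn_le hα0.le hα1.le hμ0 hμ1.le ?_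
    rw [mem_powersetCard_univ.mp hI, ← div_le_iff₀' hα0]
    exact Nat.le_ceil _
  have hchoose : (k.choose t : ℝ) ≤ (2 : ℝ) ^ (logb 2 k * t) :=
    (Nat.cast_le.mpr (k.choose_le_pow t)).trans_eq (Nat.cast_pow k t) |>.trans
      (natCast_pow_le_two_rpow_logb_mul k t)
  have hbound := hunion.trans (sum_le_card_nsmul _ _ _ hfixed)
  rw [card_powersetCard, card_univ, Fintype.card_fin, nsmul_eq_mul] at hbound
  have hprod := mul_le_mul_of_nonneg_right hchoose (rpow_nonneg zero_le_two (-(μ ^ 2 * m / 16)))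
  rw [sub_eq_add_neg (logb 2 k * t), rpow_add two_pos]
  linarith [prSets_add_prSets_compl α E]
end

section
/- For any 0 < α, η < 1 and m, k, ℓ ∈ ℕ, let r = ⌈ln(2/η)/α^ℓ⌉ and let S₁, …, S_k be independent random subsets of an m-element universe U, where each element of U is included in each S_i independently with probability α. Then the collection S = {S₁, …, S_k} is an (r, ℓ, η)-intersection disperser with probability at least 1 − 2^{ℓ·r·log₂(2k) − ηm/6}. -/
open Finset

namespace Stmt17

noncomputable def w (α : ℝ) (b : Bool) : ℝ := cond b α (1 - α)

noncomputable def W {k : ℕ} (α : ℝ) (c : Fin k → Bool) : ℝ := ∏ i, w α (c i)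

def swapEquiv (β γ δ : Type*) : (β → γ → δ) ≃ (γ → β → δ) :=
  ⟨Function.swap, Function.swap, fun _ => rfl, fun _ => rfl⟩

lemma sum_fn_prod {ι β : Type*} [Fintype ι] [DecidableEq ι] [Fintype β]
    (g : ι → β → ℝ) :
    ∑ f : ι → β, ∏ i, g i (f i) = ∏ i, ∑ b, g i b := by
  rw [Finset.prod_univ_sum (fun _ => univ) g, Fintype.piFinset_univ]

lemma sum_w (α : ℝ) : ∑ b : Bool, w α b = 1 := by simp [w]

lemma w_nonneg {α : ℝ} (h0 : 0 ≤ α) (h1 : α ≤ 1) (b : Bool) : 0 ≤ w α b := by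
  cases b <;> simp [w] <;> linarith

lemma sum_W {k : ℕ} (α : ℝ) : ∑ c : Fin k → Bool, W α c = 1 := by
  have := sum_fn_prod (ι := Fin k) (fun _ b => w α b)
  simp only [W]
  rw [this]
  simp only [sum_w, Finset.prod_const_one]

lemma W_nonneg {k : ℕ} {α : ℝ} (h0 : 0 ≤ α) (h1 : α ≤ 1) (c : Fin k → Bool) : 0 ≤ W α c :=
  Finset.prod_nonneg fun i _ => w_nonneg h0 h1 _

/-- key factorization over columns -/
lemma colFactor {U : Type*} [Fintype U] [DecidableEq U] (k : ℕ) (α : ℝ)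
    (G : U → (Fin k → Bool) → ℝ) :
    ∑ ω : Fin k → U → Bool, (∏ i, ∏ u, w α (ω i u)) * ∏ u, G u (fun i => ω i u)
      = ∏ u, ∑ c : Fin k → Bool, W α c * G u c := by
  rw [← Equiv.sum_comp (swapEquiv U (Fin k) Bool),
    ← sum_fn_prod (fun u c => W α c * G u c)]
  refine Finset.sum_congr rfl fun σ _ => ?_
  show (∏ i, ∏ u, w α (σ u i)) * ∏ u, G u (fun i => σ u i)
      = ∏ u, W α (σ u) * G u (σ u)
  rw [Finset.prod_comm, ← Finset.prod_mul_distrib]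
  rfl

/-- moment: probability that all coordinates in B are true -/
lemma moment {k : ℕ} (α : ℝ) (B : Finset (Fin k)) :
    ∑ c : Fin k → Bool, W α c * ∏ i ∈ B, (cond (c i) (1:ℝ) 0) = α ^ B.card := by
  have h1 : ∀ c : Fin k → Bool, W α c * ∏ i ∈ B, (cond (c i) (1:ℝ) 0)
      = ∏ i, (w α (c i) * (if i ∈ B then cond (c i) (1:ℝ) 0 else 1)) := by
    intro c
    rw [Finset.prod_mul_distrib, W]
    congr 1
    rw [Finset.prod_ite_mem, univ_inter]
  simp_rw [h1]
  rw [sum_fn_prod (fun i b => w α b * (if i ∈ B then cond b (1:ℝ) 0 else 1))]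
  have h2 : ∀ i : Fin k, ∑ b : Bool, w α b * (if i ∈ B then cond b (1:ℝ) 0 else 1)
      = if i ∈ B then α else 1 := by
    intro i
    by_cases h : i ∈ B <;> simp [h, w]
  simp_rw [h2]
  rw [Finset.prod_ite_mem, univ_inter, Finset.prod_const]

noncomputable def X {k r : ℕ} (I : Fin r → Finset (Fin k)) (a : Fin r) (c : Fin k → Bool) : ℝ :=
  ∏ i ∈ I a, cond (c i) (1:ℝ) 0

lemma qform {k r : ℕ} (α : ℝ) (I : Fin r → Finset (Fin k))
    (hdisj : Pairwise fun a b => Disjoint (I a) (I b)) :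
    ∑ c : Fin k → Bool, W α c * ∏ a, (1 - X I a c) = ∏ a, (1 - α ^ (I a).card) := by
  have expand : ∀ y : Fin r → ℝ, ∏ a, (1 - y a)
      = ∑ t ∈ (univ : Finset (Fin r)).powerset, (∏ a ∈ t, (-y a)) * ∏ a ∈ univ \ t, (1:ℝ) := by
    intro y
    rw [← Finset.prod_add]
    exact Finset.prod_congr rfl fun a _ => by ring
  simp_rw [expand fun a => X I a _, Finset.mul_sum, Finset.sum_comm (γ := Fin k → Bool)]
  rw [expand fun a => α ^ (I a).card]
  refine Finset.sum_congr rfl fun t ht => ?_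
  have hprodX : ∀ c : Fin k → Bool, ∏ a ∈ t, (-X I a c)
      = (-1 : ℝ) ^ t.card * ∏ i ∈ t.biUnion I, cond (c i) (1:ℝ) 0 := by
    intro c
    have hneg : ∀ a ∈ t, -X I a c = (-1:ℝ) * X I a c := fun a _ => by ring
    rw [Finset.prod_congr rfl hneg, Finset.prod_mul_distrib, Finset.prod_const,
      Finset.prod_biUnion (fun a _ b _ hab => hdisj hab)]
    rfl
  simp_rw [Finset.prod_const_one, mul_one, hprodX, mul_comm ((-1:ℝ) ^ t.card), ← mul_assoc]
  rw [← Finset.sum_mul, moment, Finset.card_biUnion (fun a _ b _ hab => hdisj hab),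
    ← Finset.prod_pow_eq_pow_sum]
  rw [show ∏ a ∈ t, (-(α ^ (I a).card)) = ∏ a ∈ t, (-1 : ℝ) * α ^ (I a).card from
    Finset.prod_congr rfl fun a _ => by ring]
  rw [Finset.prod_mul_distrib, Finset.prod_const]
  ring

noncomputable def phi {k r : ℕ} (I : Fin r → Finset (Fin k)) (c : Fin k → Bool) : ℝ :=
  1 + ∏ a, (1 - X I a c)

set_option maxRecDepth 8000 in
lemma phi_eq {k r : ℕ} (I : Fin r → Finset (Fin k)) (c : Fin k → Bool) :
    phi I c = if (∃ a, ∀ i ∈ I a, c i = true) then 1 else 2 := by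
  classical
  by_cases h : ∃ a, ∀ i ∈ I a, c i = true
  · rw [if_pos h]
    obtain ⟨a, ha⟩ := h
    have hX : X I a c = 1 := Finset.prod_eq_one fun i hi => by rw [ha i hi]; rfl
    have h0 : ∏ a', (1 - X I a' c) = 0 :=
      Finset.prod_eq_zero (Finset.mem_univ a) (by rw [hX]; ring)
    have hp : phi I c = 1 + ∏ a', (1 - X I a' c) := rfl
    rw [hp, h0, add_zero]
  · rw [if_neg h]
    push_neg at h
    have hX : ∀ a, X I a c = 0 := fun a => by
      obtain ⟨i, hi, hci⟩ := h a
      refine Finset.prod_eq_zero hi ?_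
      have hcf : c i = false := by revert hci; cases c i <;> simp
      rw [hcf]; rfl
    have h1 : ∏ a', (1 - X I a' c) = 1 :=
      Finset.prod_eq_one fun a _ => by rw [hX a]; ring
    have hp : phi I c = 1 + ∏ a', (1 - X I a' c) := rfl
    rw [hp, h1]; norm_num

lemma chernoff {U : Type*} [Fintype U] [DecidableEq U] {k ℓ r m : ℕ}
    (hU : Fintype.card U = m) {α η : ℝ} (hα0 : 0 < α) (hα1 : α < 1)
    (hη0 : 0 < η) (hη1 : η < 1)
    (hr : Real.log (2 / η) ≤ (r : ℝ) * α ^ ℓ)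
    (I : Fin r → Finset (Fin k)) (hcard : ∀ a, (I a).card ≤ ℓ)
    (hdisj : Pairwise fun a b => Disjoint (I a) (I b)) :
    prSets (U := U) k α
      {ω | ¬ (1 - η) * (Fintype.card U : ℝ)
        ≤ ((univ.sup fun a => (I a).inf (subsetOf ω)).card : ℝ)}
      ≤ (2:ℝ) ^ (-(η * m) / 6) := by
  classical
  set q : ℝ := ∏ a, (1 - α ^ (I a).card) with hqdef
  have hfac0 : ∀ a : Fin r, 0 ≤ 1 - α ^ (I a).card := fun a => by
    have := pow_le_one₀ hα0.le hα1.le (n := (I a).card); linarith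
  have hq0 : 0 ≤ q := Finset.prod_nonneg fun a _ => hfac0 a
  have hq : q ≤ η / 2 := by
    have h1 : q ≤ (1 - α ^ ℓ) ^ r := by
      calc q ≤ ∏ _a : Fin r, (1 - α ^ ℓ) := by
              refine Finset.prod_le_prod (fun a _ => hfac0 a) (fun a _ => ?_)
              have := pow_le_pow_of_le_one hα0.le hα1.le (hcard a)
              linarith
        _ = (1 - α ^ ℓ) ^ r := by
              rw [Finset.prod_const, Finset.card_univ, Fintype.card_fin]
    have h2 : (1 - α ^ ℓ) ^ r ≤ Real.exp (-(α ^ ℓ)) ^ r := by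
      refine pow_le_pow_left₀ ?_ ?_ r
      · have := pow_le_one₀ hα0.le hα1.le (n := ℓ); linarith
      · have := Real.add_one_le_exp (-(α ^ ℓ)); linarith
    have h3 : Real.exp (-(α ^ ℓ)) ^ r = Real.exp ((r : ℝ) * (-(α ^ ℓ))) := by
      rw [Real.exp_nat_mul]
    have h4 : Real.exp ((r : ℝ) * (-(α ^ ℓ))) ≤ Real.exp (-(Real.log (2 / η))) := by
      apply Real.exp_le_exp.2
      rw [mul_neg]
      exact neg_le_neg hr
    have h5 : Real.exp (-(Real.log (2 / η))) = η / 2 := by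
      rw [Real.exp_neg, Real.exp_log (by positivity), inv_div]
    linarith
  -- Markov argument
  set T : (Fin k → U → Bool) → Finset U := fun ω => univ.sup fun a => (I a).inf (subsetOf ω)
    with hTdef
  set B : Set (Fin k → U → Bool) :=
    {ω | ¬ (1 - η) * (Fintype.card U : ℝ) ≤ ((T ω).card : ℝ)} with hBdef
  have hp0 : ∀ ω : Fin k → U → Bool, 0 ≤ ∏ i, ∏ u, w α (ω i u) := fun ω =>
    Finset.prod_nonneg fun i _ => Finset.prod_nonneg fun u _ => w_nonneg hα0.le hα1.le _
  have hmem : ∀ (ω : Fin k → U → Bool) (u : U), u ∈ T ω ↔ ∃ a, ∀ i ∈ I a, ω i u = true := by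
    intro ω u
    simp [hTdef, Finset.mem_sup, Finset.mem_inf, subsetOf, Finset.mem_filter]
  have hphi0 : ∀ c : Fin k → Bool, 0 ≤ phi I c := fun c => by
    rw [phi_eq]; split <;> norm_num
  have hphiTwo : ∀ ω : Fin k → U → Bool,
      ∏ u, phi I (fun i => ω i u) = 2 ^ (m - (T ω).card) := by
    intro ω
    have h1 : ∀ u : U, phi I (fun i => ω i u) = if u ∈ T ω then (1:ℝ) else 2 := by
      intro u
      rw [phi_eq]
      by_cases hu : u ∈ T ω
      · rw [if_pos ((hmem ω u).1 hu), if_pos hu]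
      · rw [if_neg (fun hex => hu ((hmem ω u).2 hex)), if_neg hu]
    rw [Finset.prod_congr rfl fun u _ => h1 u,
      ← Finset.prod_filter_mul_prod_filter_not univ (fun u => u ∈ T ω)]
    have e1 : ∏ u ∈ univ.filter (fun u => u ∈ T ω), (if u ∈ T ω then (1:ℝ) else 2) = 1 := by
      refine Finset.prod_eq_one fun u hu => if_pos (Finset.mem_filter.1 hu).2
    have e2 : ∏ u ∈ univ.filter (fun u => ¬ u ∈ T ω), (if u ∈ T ω then (1:ℝ) else 2)
        = 2 ^ (m - (T ω).card) := by
      rw [Finset.prod_congr rfl fun u hu => if_neg (Finset.mem_filter.1 hu).2,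
        Finset.prod_const]
      congr 1
      have hsplit := Finset.card_filter_add_card_filter_not
        (s := (univ : Finset U)) (p := fun u => u ∈ T ω)
      have hfeq : (univ.filter fun u => u ∈ T ω) = T ω := by ext u; simp
      rw [hfeq, Finset.card_univ, hU] at hsplit
      omega
    rw [e1, e2, one_mul]
  have hEphi : ∑ ω : Fin k → U → Bool,
      (∏ i, ∏ u, w α (ω i u)) * ∏ u, phi I (fun i => ω i u) = (1 + q) ^ m := by
    rw [colFactor k α (fun _ c => phi I c)]
    have hcol : ∑ c : Fin k → Bool, W α c * phi I c = 1 + q := by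
      have hpt : ∀ c : Fin k → Bool, W α c * phi I c
          = W α c + W α c * ∏ a, (1 - X I a c) := fun c => by
        have hp : phi I c = 1 + ∏ a, (1 - X I a c) := rfl
        rw [hp]; ring
      rw [Finset.sum_congr rfl fun c _ => hpt c, Finset.sum_add_distrib, sum_W,
        qform α I hdisj]
    rw [hcol, Finset.prod_const, Finset.card_univ, hU]
  have hP2pos : (0:ℝ) < (2:ℝ) ^ (η * m) := Real.rpow_pos_of_pos two_pos _
  have markov : prSets (U := U) k α B * (2:ℝ) ^ (η * m) ≤ (1 + q) ^ m := by
    rw [← hEphi, prSets, Finset.sum_mul]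
    refine Finset.sum_le_sum fun ω _ => ?_
    by_cases hω : ω ∈ B
    · rw [Set.indicator_of_mem hω]
      have hωB : ¬ (1 - η) * (Fintype.card U : ℝ) ≤ ((T ω).card : ℝ) := hω
      have hcardle : (T ω).card ≤ m := by
        rw [← hU]; exact Finset.card_le_univ _
      have hexp : η * m ≤ (((m - (T ω).card : ℕ)) : ℝ) := by
        rw [Nat.cast_sub hcardle, hU] at *
        push_neg at hωB
        nlinarith
      have h2 : (2:ℝ) ^ (η * m) ≤ ∏ u, phi I fun i => ω i u := by
        rw [hphiTwo ω]
        calc (2:ℝ) ^ (η * m) ≤ (2:ℝ) ^ (((m - (T ω).card : ℕ)) : ℝ) :=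
              Real.rpow_le_rpow_of_exponent_le one_le_two hexp
          _ = 2 ^ (m - (T ω).card) := Real.rpow_natCast 2 _
      exact mul_le_mul_of_nonneg_left h2 (hp0 ω)
    · rw [Set.indicator_of_notMem hω, zero_mul]
      exact mul_nonneg (hp0 ω) (Finset.prod_nonneg fun u _ => hphi0 _)
  have hfin : prSets (U := U) k α B ≤ (1 + q) ^ m / (2:ℝ) ^ (η * m) :=
    (le_div_iff₀ hP2pos).2 markov
  have hexp2 : (1 + q) ^ m ≤ Real.exp ((m : ℝ) * (η / 2)) := by
    have h1 : (1 + q) ≤ Real.exp q := by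
      have := Real.add_one_le_exp q; linarith
    have h2 : (1 + q) ^ m ≤ Real.exp q ^ m := pow_le_pow_left₀ (by linarith) h1 m
    have h3 : Real.exp q ^ m = Real.exp ((m:ℝ) * q) := (Real.exp_nat_mul q m).symm
    have h4 : Real.exp ((m:ℝ) * q) ≤ Real.exp ((m : ℝ) * (η / 2)) := by
      apply Real.exp_le_exp.2
      have hm : (0:ℝ) ≤ m := Nat.cast_nonneg m
      nlinarith
    rw [← h3] at h4
    linarith
  have hnum : Real.exp ((m : ℝ) * (η / 2)) ≤ (2:ℝ) ^ ((5:ℝ)/6 * (η * m)) := by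
    rw [Real.rpow_def_of_pos two_pos]
    apply Real.exp_le_exp.2
    have hl2 : (0.6931471803 : ℝ) < Real.log 2 := Real.log_two_gt_d9
    have hm0 : (0:ℝ) ≤ η * m := mul_nonneg hη0.le (Nat.cast_nonneg m)
    nlinarith
  calc prSets (U := U) k α B ≤ (1+q)^m / (2:ℝ)^(η*m) := hfin
    _ ≤ (2:ℝ) ^ ((5:ℝ)/6 * (η*m)) / (2:ℝ)^(η*m) := by
        exact (div_le_div_iff_of_pos_right hP2pos).2 (hexp2.trans hnum)
    _ = (2:ℝ) ^ (-(η*m)/6) := by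
        rw [← Real.rpow_sub two_pos]
        congr 1
        ring

lemma sum_p {U : Type*} [Fintype U] [DecidableEq U] (k : ℕ) (α : ℝ) :
    ∑ ω : Fin k → U → Bool, (∏ i, ∏ u, cond (ω i u) α (1 - α)) = 1 := by
  show ∑ ω : Fin k → U → Bool, (∏ i, ∏ u, w α (ω i u)) = 1
  have h := colFactor (U := U) k α (fun _ _ => (1:ℝ))
  simp only [mul_one, Finset.prod_const_one] at h
  rw [h]
  simp [sum_W]

lemma prSets_univ {U : Type*} [Fintype U] [DecidableEq U] (k : ℕ) (α : ℝ) :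
    prSets (U := U) k α Set.univ = 1 := by
  rw [prSets]
  simp only [Set.indicator_univ]
  exact sum_p k α

lemma fam_surj {k ℓ : ℕ} (s : Finset (Fin k)) (hs : s.card ≤ ℓ) :
    ∃ g : Fin ℓ → Option (Fin k), (univ.biUnion fun j => (g j).toFinset) = s := by
  refine ⟨fun j => s.toList[(j : ℕ)]?, ?_⟩
  ext i
  simp only [Finset.mem_biUnion, Finset.mem_univ, true_and, Option.mem_toFinset,
    Option.mem_def]
  constructor
  · rintro ⟨j, hj⟩
    obtain ⟨h, hh⟩ := List.getElem?_eq_some_iff.1 hj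
    rw [← Finset.mem_toList, ← hh]
    exact List.getElem_mem h
  · intro hi
    obtain ⟨n, hn, hget⟩ := List.mem_iff_getElem.1 (Finset.mem_toList.2 hi)
    have hn' : n < ℓ := lt_of_lt_of_le (by rwa [Finset.length_toList] at hn) hs
    exact ⟨⟨n, hn'⟩, by rw [List.getElem?_eq_getElem hn, hget]⟩

def famOf {k r ℓ : ℕ} (f : Fin r → Fin ℓ → Option (Fin k)) (a : Fin r) : Finset (Fin k) :=
  univ.biUnion fun j => (f a j).toFinset

def CSet (U : Type*) [Fintype U] [DecidableEq U] {k r ℓ : ℕ} (η : ℝ)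
    (f : Fin r → Fin ℓ → Option (Fin k)) : Set (Fin k → U → Bool) :=
  {ω | ((∀ a, (famOf f a).card ≤ ℓ) ∧ Pairwise fun a b => Disjoint (famOf f a) (famOf f b)) ∧
    ¬ (1 - η) * (Fintype.card U : ℝ)
      ≤ ((univ.sup fun a => (famOf f a).inf (subsetOf ω)).card : ℝ)}

end Stmt17

open Stmt17 in
/-- For `r = ⌈ln(2/η)/α^ℓ⌉` and random subsets `S₁, …, S_k` of an `m`-element universe,
each including each element independently with probability `α`, the collection
`{S₁, …, S_k}` is an `(r, ℓ, η)`-intersection disperser with probability at least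
`1 − 2^{ℓ·r·log₂(2k) − ηm/6}`. -/
theorem stmt17 {U : Type*} [Fintype U] [DecidableEq U] (m k ℓ : ℕ)
    (hU : Fintype.card U = m)
    (α η : ℝ) (hα0 : 0 < α) (hα1 : α < 1) (hη0 : 0 < η) (hη1 : η < 1) :
    1 - (2 : ℝ) ^ ((ℓ : ℝ) * (⌈Real.log (2 / η) / α ^ ℓ⌉₊ : ℝ) *
        Real.logb 2 (2 * (k : ℝ)) - η * (m : ℝ) / 6) ≤
      prSets (U := U) k α
        {ω | IsDisperser (subsetOf ω) ⌈Real.log (2 / η) / α ^ ℓ⌉₊ ℓ η} := by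
  classical
  set r := ⌈Real.log (2 / η) / α ^ ℓ⌉₊ with hrdef
  have hlogpos : 0 < Real.log (2 / η) :=
    Real.log_pos (by rw [lt_div_iff₀ hη0]; linarith)
  have hrpos : 0 < r := Nat.ceil_pos.2 (div_pos hlogpos (pow_pos hα0 ℓ))
  have hppos : (0:ℝ) < (2:ℝ) ^ ((ℓ : ℝ) * (r : ℝ) * Real.logb 2 (2 * (k : ℝ)) - η * m / 6) :=
    Real.rpow_pos_of_pos two_pos _
  by_cases hk : k = 0
  · subst hk
    have huniv : {ω : Fin 0 → U → Bool | IsDisperser (subsetOf ω) r ℓ η} = Set.univ := by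
      ext ω
      simp only [Set.mem_setOf_eq, Set.mem_univ, iff_true]
      intro I hne _ _
      exact Fin.elim0 (hne ⟨0, hrpos⟩).choose
    rw [huniv, prSets_univ]
    linarith
  -- main case
  have hk1 : 1 ≤ k := Nat.one_le_iff_ne_zero.2 hk
  -- indicator weight function and its nonnegativity
  have hind_nonneg : ∀ (E : Set (Fin k → U → Bool)) ω,
      0 ≤ E.indicator (fun ω => ∏ i : Fin k, ∏ u : U, cond (ω i u) α (1 - α)) ω := by
    intro E ω
    refine Set.indicator_nonneg (fun ω _ => ?_) ω
    exact Finset.prod_nonneg fun i _ => Finset.prod_nonneg fun u _ =>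
      w_nonneg hα0.le hα1.le (ω i u)
  -- complement identity
  have hcompl : prSets (U := U) k α {ω | IsDisperser (subsetOf ω) r ℓ η}
      = 1 - prSets (U := U) k α {ω | ¬ IsDisperser (subsetOf ω) r ℓ η} := by
    rw [eq_sub_iff_add_eq, prSets, prSets, ← Finset.sum_add_distrib]
    have hpt : ∀ ω : Fin k → U → Bool,
        ({ω | IsDisperser (subsetOf ω) r ℓ η}.indicator
            (fun ω => ∏ i : Fin k, ∏ u : U, cond (ω i u) α (1 - α)) ω)
          + ({ω | ¬ IsDisperser (subsetOf ω) r ℓ η}.indicator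
            (fun ω => ∏ i : Fin k, ∏ u : U, cond (ω i u) α (1 - α)) ω)
          = ∏ i : Fin k, ∏ u : U, cond (ω i u) α (1 - α) := by
      intro ω
      by_cases h : IsDisperser (subsetOf ω) r ℓ η
      · rw [Set.indicator_of_mem (by exact h), Set.indicator_of_notMem (by simp [h]),
          add_zero]
      · rw [Set.indicator_of_notMem (by exact h), Set.indicator_of_mem (by exact h),
          zero_add]
    rw [Finset.sum_congr rfl fun ω _ => hpt ω]
    exact sum_p k α
  rw [hcompl]
  have key : prSets (U := U) k α {ω | ¬ IsDisperser (subsetOf ω) r ℓ η}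
      ≤ (2:ℝ) ^ ((ℓ : ℝ) * (r : ℝ) * Real.logb 2 (2 * (k : ℝ)) - η * m / 6) := by
    have hr' : Real.log (2 / η) ≤ (r : ℝ) * α ^ ℓ := by
      have := (div_le_iff₀ (pow_pos hα0 ℓ)).1 (Nat.le_ceil (Real.log (2 / η) / α ^ ℓ))
      rwa [hrdef]
    have hCbound : ∀ f : Fin r → Fin ℓ → Option (Fin k),
        prSets (U := U) k α (CSet U η f) ≤ (2:ℝ) ^ (-(η * m) / 6) := by
      intro f
      by_cases hQ : (∀ a, (famOf f a).card ≤ ℓ)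
          ∧ Pairwise fun a b => Disjoint (famOf f a) (famOf f b)
      · have hCeq : CSet U η f = {ω | ¬ (1 - η) * (Fintype.card U : ℝ)
            ≤ ((univ.sup fun a => (famOf f a).inf (subsetOf ω)).card : ℝ)} := by
          ext ω
          exact ⟨fun h => h.2, fun h => ⟨hQ, h⟩⟩
        rw [hCeq]
        exact chernoff hU hα0 hα1 hη0 hη1 hr' (famOf f) hQ.1 hQ.2
      · have hCeq : CSet U η f = ∅ := by
          ext ω
          simp only [CSet, Set.mem_setOf_eq, Set.mem_empty_iff_false, iff_false, not_and]
          intro hC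
          exact absurd hC hQ
        rw [hCeq]
        have h0 : prSets (U := U) k α ∅ = 0 := by simp [prSets]
        rw [h0]
        positivity
    have hub : prSets (U := U) k α {ω | ¬ IsDisperser (subsetOf ω) r ℓ η}
        ≤ ∑ f : Fin r → Fin ℓ → Option (Fin k), prSets (U := U) k α (CSet U η f) := by
      have hswap : ∑ f : Fin r → Fin ℓ → Option (Fin k), prSets (U := U) k α (CSet U η f)
          = ∑ ω : Fin k → U → Bool, ∑ f : Fin r → Fin ℓ → Option (Fin k),
              (CSet U η f).indicator
                (fun ω => ∏ i : Fin k, ∏ u : U, cond (ω i u) α (1 - α)) ω := by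
        simp only [prSets]
        rw [Finset.sum_comm]
      rw [hswap, prSets]
      refine Finset.sum_le_sum fun ω _ => ?_
      by_cases hω : IsDisperser (subsetOf ω) r ℓ η
      · rw [Set.indicator_of_notMem (by simpa using hω)]
        exact Finset.sum_nonneg fun f _ => hind_nonneg _ ω
      · rw [Set.indicator_of_mem (by exact hω)]
        simp only [IsDisperser] at hω
        push_neg at hω
        obtain ⟨I, hne, hcard, hdisj, hbad⟩ := hω
        choose g hg using fun a => fam_surj (I a) (hcard a)
        have hfam : famOf g = I := funext fun a => hg a
        have hωC : ω ∈ CSet U η g := by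
          simp only [CSet, Set.mem_setOf_eq, hfam]
          exact ⟨⟨hcard, hdisj⟩, not_le.2 hbad⟩
        calc (∏ i : Fin k, ∏ u : U, cond (ω i u) α (1 - α))
            = (CSet U η g).indicator
                (fun ω => ∏ i : Fin k, ∏ u : U, cond (ω i u) α (1 - α)) ω :=
              (Set.indicator_of_mem hωC (fun ω => ∏ i : Fin k, ∏ u : U, cond (ω i u) α (1 - α))).symm
          _ ≤ ∑ f : Fin r → Fin ℓ → Option (Fin k), (CSet U η f).indicator
                (fun ω => ∏ i : Fin k, ∏ u : U, cond (ω i u) α (1 - α)) ω :=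
              Finset.single_le_sum (fun f _ => hind_nonneg _ ω) (Finset.mem_univ g)
    have hcount : ∑ f : Fin r → Fin ℓ → Option (Fin k), prSets (U := U) k α (CSet U η f)
        ≤ (((k+1 : ℕ)) : ℝ) ^ (ℓ * r) * (2:ℝ) ^ (-(η * m) / 6) := by
      calc ∑ f : Fin r → Fin ℓ → Option (Fin k), prSets (U := U) k α (CSet U η f)
          ≤ ∑ _f : Fin r → Fin ℓ → Option (Fin k), (2:ℝ) ^ (-(η * m) / 6) :=
            Finset.sum_le_sum fun f _ => hCbound f
        _ = (Fintype.card (Fin r → Fin ℓ → Option (Fin k)) : ℝ)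
              * (2:ℝ) ^ (-(η * m) / 6) := by
            rw [Finset.sum_const, Finset.card_univ, nsmul_eq_mul]
        _ = (((k+1 : ℕ)) : ℝ) ^ (ℓ * r) * (2:ℝ) ^ (-(η * m) / 6) := by
            congr 1
            rw [show Fintype.card (Fin r → Fin ℓ → Option (Fin k))
                = ((k+1) ^ ℓ) ^ r by simp [Fintype.card_fun]]
            rw [← pow_mul]
            push_cast
            ring
    have h2k : (1:ℝ) ≤ (k:ℝ) := by exact_mod_cast hk1
    have hL : (2:ℝ) ^ (Real.logb 2 (2 * (k:ℝ))) = 2 * (k:ℝ) :=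
      Real.rpow_logb two_pos (by norm_num) (by linarith)
    have hstep : (((k+1:ℕ)) : ℝ) ^ (ℓ * r)
        ≤ (2:ℝ) ^ ((ℓ:ℝ) * (r:ℝ) * Real.logb 2 (2*(k:ℝ))) := by
      have h1 : (((k+1:ℕ)) : ℝ) ^ (ℓ * r) ≤ (2*(k:ℝ)) ^ (ℓ * r) := by
        apply pow_le_pow_left₀ (by positivity)
        push_cast
        linarith
      have h2 : (2*(k:ℝ)) ^ (ℓ * r) = (2:ℝ) ^ ((ℓ:ℝ) * (r:ℝ) * Real.logb 2 (2*(k:ℝ))) := by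
        conv_lhs => rw [← hL]
        rw [← Real.rpow_natCast ((2:ℝ) ^ Real.logb 2 (2*(k:ℝ))) (ℓ*r),
          ← Real.rpow_mul two_pos.le]
        congr 1
        push_cast
        ring
      rw [h2] at h1
      exact h1
    calc prSets (U := U) k α {ω | ¬ IsDisperser (subsetOf ω) r ℓ η}
        ≤ ∑ f : Fin r → Fin ℓ → Option (Fin k), prSets (U := U) k α (CSet U η f) := hub
      _ ≤ (((k+1 : ℕ)) : ℝ) ^ (ℓ * r) * (2:ℝ) ^ (-(η * m) / 6) := hcount
      _ ≤ (2:ℝ) ^ ((ℓ:ℝ) * (r:ℝ) * Real.logb 2 (2*(k:ℝ))) * (2:ℝ) ^ (-(η * m) / 6) :=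
          mul_le_mul_of_nonneg_right hstep (Real.rpow_pos_of_pos two_pos _).le
      _ = (2:ℝ) ^ ((ℓ : ℝ) * (r : ℝ) * Real.logb 2 (2 * (k : ℝ)) - η * m / 6) := by
          rw [← Real.rpow_add two_pos]
          congr 1
          ring
  linarith
end

section
/- For any 0 < α, μ, η < 1 and m, k, ℓ ∈ ℕ, let S₁, …, S_k be independent random subsets of an m-element universe U, where each element of U is included in each S_i independently with probability α. Then with probability at least 1 − 2^{(log₂ k)·⌈8ln(2/μ)/α⌉ − μ²m/16} − 2^{ℓ·⌈ln(2/η)/α^ℓ⌉·log₂(2k) − ηm/6} − 2^{(log₂ k) − αm/3}, the following three properties hold simultaneously: (i) every subset S_i has size at most 2αm; (ii) the collection S = {S₁,…,S_k} is a (⌈ln(2/η)/α^ℓ⌉, ℓ, η)-intersection disperser; (iii) every subcollection of S of size ⌈8ln(2/μ)/α⌉ is (α/2, μ)-uniform. -/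
/-!
Write the `k` random sets as a `k × m` matrix of independent `Bernoulli(α)` bits. Each of the three
properties can only fail through a witness (an index `i`, a subcollection `I` of size `n`, or an
admissible family `I₁, …, I_r`) for which more than a `c`-fraction of the columns `u` are bad, where
the badness of column `u` depends on that column only and has probability at most `c / 2`. Since
the columns are independent, Markov's inequality for `2 ^ #(bad columns)` bounds this probability
by `2⁻ᶜᵐ (1 + c/2)ᵐ ≤ 2^(-cm/6)`. A union bound over the at most `k`, `kⁿ` and `(2k)^(ℓr)` witnesses
gives the three error terms. The per-column bounds are `α` (a single bit), the lower Chernoff tail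
`2^(αn/2) (1 - α/2)ⁿ ≤ μ/2` (a column of `I` with fewer than `αn/2` ones), and
`∏ₐ (1 - α^|Iₐ|) ≤ (1 - α^ℓ)^r ≤ η/2` (a column missing every `⋂_{i ∈ Iₐ} Sᵢ`).
-/

open Finset

lemma one_add_pow_le_exp {x : ℝ} (hx : -1 ≤ x) (n : ℕ) : (1 + x) ^ n ≤ Real.exp (x * n) := by
  rw [mul_comm, Real.exp_nat_mul]
  exact pow_le_pow_left₀ (by linarith) (by linarith [Real.add_one_le_exp x]) n

lemma two_rpow_neg_mul_one_add_half_pow_le {c : ℝ} (hc : 0 ≤ c) (n : ℕ) :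
    (2 : ℝ) ^ (-(c * n)) * (1 + c / 2) ^ n ≤ 2 ^ (-(c * n / 6)) := by
  have hcn : 0 ≤ c * n := by positivity
  rw [Real.rpow_def_of_pos two_pos, Real.rpow_def_of_pos two_pos]
  calc Real.exp (Real.log 2 * -(c * n)) * (1 + c / 2) ^ n
      ≤ Real.exp (Real.log 2 * -(c * n)) * Real.exp (c / 2 * n) := by
        gcongr
        exact one_add_pow_le_exp (by linarith) n
    _ = Real.exp (Real.log 2 * -(c * n) + c / 2 * n) := (Real.exp_add _ _).symm
    _ ≤ Real.exp (Real.log 2 * -(c * n / 6)) :=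
        Real.exp_le_exp.2 (by nlinarith [Real.log_two_gt_d9])

lemma two_rpow_mul_one_sub_half_pow_le_exp {α : ℝ} (hα₀ : 0 ≤ α) (hα₂ : α ≤ 2) (n : ℕ) :
    (2 : ℝ) ^ (α / 2 * n) * (1 - α / 2) ^ n ≤ Real.exp (-(α * n / 8)) := by
  have hαn : 0 ≤ α * n := by positivity
  rw [Real.rpow_def_of_pos two_pos, sub_eq_add_neg]
  calc Real.exp (Real.log 2 * (α / 2 * n)) * (1 + -(α / 2)) ^ n
      ≤ Real.exp (Real.log 2 * (α / 2 * n)) * Real.exp (-(α / 2) * n) := by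
        gcongr
        exact one_add_pow_le_exp (by linarith) n
    _ = Real.exp (Real.log 2 * (α / 2 * n) + -(α / 2) * n) := (Real.exp_add _ _).symm
    _ ≤ Real.exp (-(α * n / 8)) := Real.exp_le_exp.2 (by nlinarith [Real.log_two_lt_d9])

lemma one_sub_pow_le_exp {p : ℝ} (hp : p ≤ 1) (n : ℕ) : (1 - p) ^ n ≤ Real.exp (-(p * n)) := by
  simpa [sub_eq_add_neg] using one_add_pow_le_exp (x := -p) (by linarith) n

lemma exp_neg_log_two_div {x : ℝ} (hx : 0 < x) : Real.exp (-Real.log (2 / x)) = x / 2 := by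
  rw [Real.exp_neg, Real.exp_log (by positivity), inv_div]

lemma natCast_pow_mul_two_rpow_neg_le (N n : ℕ) (x : ℝ) :
    (N : ℝ) ^ n * 2 ^ (-x) ≤ 2 ^ (Real.logb 2 N * n - x) := by
  rw [sub_eq_add_neg, Real.rpow_add two_pos]
  gcongr
  rcases N.eq_zero_or_pos with rfl | hN
  · rcases n.eq_zero_or_pos with rfl | hn
    · simp
    · simp [zero_pow hn.ne']
  · rw [Real.rpow_mul zero_le_two, Real.rpow_logb two_pos (by norm_num) (by exact_mod_cast hN),
      Real.rpow_natCast]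

lemma Finset.Nonempty.exists_fin_image_eq {α : Type*} [DecidableEq α] {t : Finset α}
    (ht : t.Nonempty) {ℓ : ℕ} (hℓ : #t ≤ ℓ) : ∃ g : Fin ℓ → α, univ.image g = t := by
  obtain ⟨g, hg⟩ : ∃ g : Fin ℓ → t, Function.Surjective g :=
    Function.exists_surjective_iff.2 ⟨⟨fun _ => ⟨_, ht.choose_spec⟩⟩,
      Function.Embedding.nonempty_of_card_le (by simpa using hℓ)⟩
  refine ⟨fun j => (g j : α), Finset.ext fun x => ⟨fun hx => ?_, fun hx => ?_⟩⟩
  · obtain ⟨j, -, rfl⟩ := Finset.mem_image.1 hx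
    exact (g j).2
  · obtain ⟨j, hj⟩ := hg ⟨x, hx⟩
    exact Finset.mem_image.2 ⟨j, Finset.mem_univ j, congrArg Subtype.val hj⟩

lemma cast_card_filter_not {U : Type*} [Fintype U] (p : U → Prop) [DecidablePred p] :
    (#{u | ¬ p u} : ℝ) = Fintype.card U - #{u | p u} := by
  rw [eq_sub_iff_add_eq, add_comm]
  exact_mod_cast (Finset.card_filter_add_card_filter_not p).trans Finset.card_univ

section Collections

variable {U ι : Type*} [Fintype U] [DecidableEq U]

lemma isDisperser_of_card_filter_le (S : ι → Finset U) {r ℓ : ℕ} {η : ℝ}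
    (h : ∀ I : Fin r → Finset ι, (∀ a, (I a).Nonempty) → (∀ a, #(I a) ≤ ℓ) →
      (Pairwise fun a b => Disjoint (I a) (I b)) →
      (#{u | ∀ a, ¬ ∀ i ∈ I a, u ∈ S i} : ℝ) ≤ η * Fintype.card U) :
    IsDisperser S r ℓ η := by
  intro I hne hcard hdisj
  have h_sup : (univ.sup fun a => (I a).inf S)
      = ({u | ¬ ∀ a, ¬ ∀ i ∈ I a, u ∈ S i} : Finset U) := by
    ext u
    simp [Finset.mem_sup, Finset.mem_inf]
  rw [h_sup, cast_card_filter_not]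
  linarith [h I hne hcard hdisj]

lemma isUniformOn_of_card_filter_le (S : ι → Finset U) (I : Finset ι) {γ μ : ℝ}
    (h : (#{u | (#{i ∈ I | u ∈ S i} : ℝ) < γ * #I} : ℝ) ≤ μ * Fintype.card U) :
    IsUniformOn S I γ μ := by
  have h_ncard : ∀ u, {i | i ∈ I ∧ u ∈ S i}.ncard = #{i ∈ I | u ∈ S i} := fun u => by
    rw [← Set.ncard_coe_finset]
    simp
  have h_set : {u : U | γ * #I ≤ ({i | i ∈ I ∧ u ∈ S i}.ncard : ℝ)}
      = ↑({u | ¬ (#{i ∈ I | u ∈ S i} : ℝ) < γ * #I} : Finset U) := by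
    ext u
    simp [h_ncard]
  rw [IsUniformOn, h_set, Set.ncard_coe_finset, cast_card_filter_not]
  linarith

end Collections

open scoped Classical in
noncomputable def admissibleFamilies (ι : Type*) [Fintype ι] (r ℓ : ℕ) :
    Finset (Fin r → Finset ι) :=
  {I | (∀ a, (I a).Nonempty) ∧ (∀ a, #(I a) ≤ ℓ) ∧ Pairwise fun a b => Disjoint (I a) (I b)}

lemma card_admissibleFamilies_le (ι : Type*) [Fintype ι] [DecidableEq ι] (r ℓ : ℕ) :
    #(admissibleFamilies ι r ℓ) ≤ Fintype.card ι ^ (ℓ * r) := by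
  have h_surj : Set.SurjOn (fun G : Fin r → Fin ℓ → ι => fun a => univ.image (G a))
      ↑(univ : Finset (Fin r → Fin ℓ → ι)) ↑(admissibleFamilies ι r ℓ) := by
    intro I hI
    simp only [admissibleFamilies, Finset.coe_filter, Finset.mem_univ, true_and,
      Set.mem_ofPred_eq] at hI
    choose G hG using fun a => (hI.1 a).exists_fin_image_eq (hI.2.1 a)
    exact ⟨G, by simp, funext hG⟩
  refine (Finset.card_le_card_of_surjOn _ h_surj).trans_eq ?_
  simp [pow_mul]

namespace BernoulliProduct

open scoped Classical in
noncomputable def ind (p : Prop) : ℝ := if p then 1 else 0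

lemma ind_pos {p : Prop} (hp : p) : ind p = 1 := if_pos hp

lemma ind_neg {p : Prop} (hp : ¬ p) : ind p = 0 := if_neg hp

lemma ind_nonneg (p : Prop) : 0 ≤ ind p := by
  by_cases hp : p <;> simp [ind, hp]

lemma ind_not (p : Prop) : ind (¬ p) = 1 - ind p := by
  by_cases hp : p <;> simp [ind, hp]

lemma ind_forall_mem {ι : Type*} (s : Finset ι) (p : ι → Prop) :
    ind (∀ i ∈ s, p i) = ∏ i ∈ s, ind (p i) := by
  simp [ind, Finset.prod_boole]

variable {V : Type*} [Fintype V] {α : ℝ}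

noncomputable def weight (α : ℝ) (f : V → Bool) : ℝ := ∏ v, cond (f v) α (1 - α)

lemma weight_nonneg (hα₀ : 0 ≤ α) (hα₁ : α ≤ 1) (f : V → Bool) : 0 ≤ weight α f :=
  Finset.prod_nonneg fun v _ => by cases f v <;> simp [hα₀, hα₁]

lemma weight_piecewise_mul_weight_piecewise (J : Set V) [DecidablePred (· ∈ J)]
    (f f' : V → Bool) :
    weight α (J.piecewise f f') * weight α (J.piecewise f' f) = weight α f * weight α f' := by
  simp only [weight, ← Finset.prod_mul_distrib]
  refine Finset.prod_congr rfl fun v _ => ?_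
  by_cases hv : v ∈ J
  · simp [Set.piecewise_eq_of_mem _ _ _ hv]
  · simp [Set.piecewise_eq_of_notMem _ _ _ hv, mul_comm]

variable [DecidableEq V]

noncomputable def mean (α : ℝ) (g : (V → Bool) → ℝ) : ℝ := ∑ f, weight α f * g f

noncomputable def prob (α : ℝ) (P : (V → Bool) → Prop) : ℝ := mean α fun f => ind (P f)

lemma mean_mono (hα₀ : 0 ≤ α) (hα₁ : α ≤ 1) {g h : (V → Bool) → ℝ} (hgh : ∀ f, g f ≤ h f) :
    mean α g ≤ mean α h :=
  Finset.sum_le_sum fun f _ => mul_le_mul_of_nonneg_left (hgh f) (weight_nonneg hα₀ hα₁ f)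

lemma mean_add (g h : (V → Bool) → ℝ) :
    mean α (fun f => g f + h f) = mean α g + mean α h := by
  simp only [mean, mul_add, Finset.sum_add_distrib]

lemma mean_const_mul (c : ℝ) (g : (V → Bool) → ℝ) :
    mean α (fun f => c * g f) = c * mean α g := by
  simp only [mean, Finset.mul_sum, mul_left_comm]

lemma mean_sum {ι : Type*} (s : Finset ι) (g : ι → (V → Bool) → ℝ) :
    mean α (fun f => ∑ i ∈ s, g i f) = ∑ i ∈ s, mean α (g i) := by
  simp only [mean, Finset.mul_sum]
  exact Finset.sum_comm

lemma mean_prod_apply (G : V → Bool → ℝ) :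
    mean α (fun f => ∏ v, G v (f v)) = ∏ v, (α * G v true + (1 - α) * G v false) := by
  simp only [mean, weight, ← Finset.prod_mul_distrib]
  rw [← Fintype.prod_sum (fun v b => cond b α (1 - α) * G v b)]
  simp

lemma sum_weight : ∑ f : V → Bool, weight α f = 1 := by
  simpa [mean] using mean_prod_apply (V := V) (α := α) fun _ _ => 1

lemma mean_const (c : ℝ) : mean α (fun _ : V → Bool => c) = c := by
  rw [mean, ← Finset.sum_mul, sum_weight, one_mul]

/-- Swapping the `J`-coordinates of two independent samples preserves their joint weight and
turns `g f * h f'` into `g F * h F`, where `F` is the first of the two swapped samples. -/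
lemma mean_mul_of_dependsOn {g h : (V → Bool) → ℝ} {J : Set V} (hg : DependsOn g J)
    (hh : DependsOn h Jᶜ) :
    mean α (fun f => g f * h f) = mean α g * mean α h := by
  classical
  let swap : (V → Bool) × (V → Bool) → (V → Bool) × (V → Bool) :=
    fun p => (J.piecewise p.1 p.2, J.piecewise p.2 p.1)
  have swap_involutive : Function.Involutive swap := fun p => by
    ext v <;> by_cases hv : v ∈ J <;> simp [swap, hv]
  have hg_swap : ∀ p, g (swap p).1 = g p.1 := fun p =>
    hg fun v hv => Set.piecewise_eq_of_mem _ _ _ hv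
  have hh_swap : ∀ p, h (swap p).1 = h p.2 := fun p =>
    hh fun v hv => Set.piecewise_eq_of_notMem _ _ _ hv
  symm
  calc mean α g * mean α h
      = ∑ p : (V → Bool) × (V → Bool), weight α p.1 * weight α p.2 * (g p.1 * h p.2) := by
        rw [mean, mean, Finset.sum_mul_sum, ← Finset.univ_product_univ, Finset.sum_product]
        exact Finset.sum_congr rfl fun _ _ => Finset.sum_congr rfl fun _ _ => by ring
    _ = ∑ p, weight α (swap p).1 * weight α (swap p).2 * (g (swap p).1 * h (swap p).1) := by
        simp only [hg_swap, hh_swap, swap, weight_piecewise_mul_weight_piecewise]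
    _ = ∑ p : (V → Bool) × (V → Bool), weight α p.1 * weight α p.2 * (g p.1 * h p.1) :=
        Equiv.sum_comp (swap_involutive.toPerm swap)
          (fun p => weight α p.1 * weight α p.2 * (g p.1 * h p.1))
    _ = mean α (fun f => g f * h f) := by
        rw [← Finset.univ_product_univ, Finset.sum_product]
        simp only [mul_right_comm _ (weight α _), ← Finset.mul_sum, sum_weight, mul_one]
        rfl

lemma mean_prod_of_dependsOn {ι : Type*} {s : Finset ι} {g : ι → (V → Bool) → ℝ}
    {J : ι → Set V} (hJ : (s : Set ι).PairwiseDisjoint J)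
    (hg : ∀ i ∈ s, DependsOn (g i) (J i)) :
    mean α (fun f => ∏ i ∈ s, g i f) = ∏ i ∈ s, mean α (g i) := by
  induction s using Finset.cons_induction with
  | empty => simpa using mean_const (V := V) (α := α) 1
  | cons i s hi ih =>
    rw [Finset.coe_cons] at hJ
    have h_rest : DependsOn (fun f => ∏ j ∈ s, g j f) (J i)ᶜ := fun f f' hff' =>
      Finset.prod_congr rfl fun j hj => hg j (Finset.mem_cons_of_mem hj) fun v hv =>
        hff' v (Set.disjoint_left.mp
          (hJ (Set.mem_insert_of_mem _ hj) (Set.mem_insert i _) (ne_of_mem_of_not_mem hj hi)) hv)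
    simp only [Finset.prod_cons]
    rw [mean_mul_of_dependsOn (hg i (Finset.mem_cons_self i s)) h_rest,
      ih (hJ.subset (Set.subset_insert i _)) fun j hj => hg j (Finset.mem_cons_of_mem hj)]

lemma prob_nonneg (hα₀ : 0 ≤ α) (hα₁ : α ≤ 1) (P : (V → Bool) → Prop) : 0 ≤ prob α P :=
  (mean_const 0).symm.trans_le (mean_mono hα₀ hα₁ fun f => ind_nonneg (P f))

lemma prob_mono (hα₀ : 0 ≤ α) (hα₁ : α ≤ 1) {P Q : (V → Bool) → Prop} (h : ∀ f, P f → Q f) :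
    prob α P ≤ prob α Q :=
  mean_mono hα₀ hα₁ fun f => by by_cases hP : P f <;> by_cases hQ : Q f <;> simp_all [ind]

lemma prob_not (P : (V → Bool) → Prop) : prob α (fun f => ¬ P f) = 1 - prob α P := by
  simp only [prob, ind_not, sub_eq_add_neg, ← neg_one_mul (ind _)]
  rw [mean_add (fun _ => 1), mean_const, mean_const_mul]
  ring

lemma one_sub_prob_not_sub_prob_not_sub_prob_not_le (hα₀ : 0 ≤ α) (hα₁ : α ≤ 1)
    (P Q R : (V → Bool) → Prop) :
    1 - prob α (fun f => ¬ P f) - prob α (fun f => ¬ Q f) - prob α (fun f => ¬ R f) ≤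
      prob α (fun f => P f ∧ Q f ∧ R f) := by
  have h := mean_mono (g := fun _ => 1)
    (h := fun f => ind (P f ∧ Q f ∧ R f) + (ind (¬ P f) + (ind (¬ Q f) + ind (¬ R f))))
    hα₀ hα₁ fun f => by
      by_cases hP : P f <;> by_cases hQ : Q f <;> by_cases hR : R f <;> simp [ind, hP, hQ, hR]
  simp only [mean_add, mean_const] at h
  simp only [prob]
  linarith

lemma prob_exists_le_card_mul (hα₀ : 0 ≤ α) (hα₁ : α ≤ 1) {ι : Type*} (s : Finset ι)
    (P : ι → (V → Bool) → Prop) {b : ℝ} (hb : ∀ i ∈ s, prob α (P i) ≤ b) :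
    prob α (fun f => ∃ i ∈ s, P i f) ≤ s.card * b := by
  calc prob α (fun f => ∃ i ∈ s, P i f) ≤ ∑ i ∈ s, prob α (P i) := by
        simp only [prob, ← mean_sum]
        refine mean_mono hα₀ hα₁ fun f => ?_
        by_cases h : ∃ i ∈ s, P i f
        · obtain ⟨i, hi, hPi⟩ := h
          rw [ind_pos ⟨i, hi, hPi⟩, ← ind_pos hPi]
          exact Finset.single_le_sum (fun j _ => ind_nonneg (P j f)) hi
        · rw [ind_neg h]
          exact Finset.sum_nonneg fun j _ => ind_nonneg (P j f)
    _ ≤ s.card * b := by simpa using Finset.sum_le_sum hb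

lemma prob_forall_mem_eq_true (T : Finset V) :
    prob α (fun f => ∀ v ∈ T, f v = true) = α ^ T.card := by
  have h := mean_prod_apply (α := α) fun v (b : Bool) => if v ∈ T then ind (b = true) else 1
  simp only [Finset.prod_ite_mem_eq, ← ind_forall_mem] at h
  rw [prob, h, ← Finset.prod_const, ← Finset.prod_ite_mem_eq T fun _ => α]
  refine Finset.prod_congr rfl fun v _ => ?_
  split_ifs <;> simp [ind]

lemma prob_eq_true (v : V) : prob α (fun f => f v = true) = α := by
  simpa using prob_forall_mem_eq_true (α := α) {v}

section Independence

variable {ι : Type*} {s : Finset ι} {A : ι → (V → Bool) → Prop} {J : ι → Set V}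

lemma prob_forall_mem_of_dependsOn (hJ : (s : Set ι).PairwiseDisjoint J)
    (hA : ∀ i ∈ s, DependsOn (A i) (J i)) :
    prob α (fun f => ∀ i ∈ s, A i f) = ∏ i ∈ s, prob α (A i) := by
  simp only [prob, ind_forall_mem]
  exact mean_prod_of_dependsOn hJ fun i hi f f' h => by rw [hA i hi h]

/-- Markov's inequality for `2 ^ #{i ∈ s | A i f}`, whose mean factors by independence. -/
lemma prob_lt_card_filter_le [∀ i f, Decidable (A i f)] (hα₀ : 0 ≤ α) (hα₁ : α ≤ 1)
    (hJ : (s : Set ι).PairwiseDisjoint J) (hA : ∀ i ∈ s, DependsOn (A i) (J i)) (a : ℝ) :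
    prob α (fun f => a < #{i ∈ s | A i f}) ≤ 2 ^ (-a) * ∏ i ∈ s, (1 + prob α (A i)) := by
  have markov : ∀ f, ind (a < #{i ∈ s | A i f}) ≤ 2 ^ (-a) * ∏ i ∈ s, (1 + ind (A i f)) := by
    intro f
    have h_prod : ∏ i ∈ s, (1 + ind (A i f)) = (2 : ℝ) ^ (#{i ∈ s | A i f} : ℝ) := by
      rw [Real.rpow_natCast, ← Finset.prod_const, Finset.prod_filter]
      exact Finset.prod_congr rfl fun i _ => by
        by_cases h : A i f <;> simp [ind, h, one_add_one_eq_two]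
    by_cases h : a < #{i ∈ s | A i f}
    · rw [ind_pos h, h_prod, ← Real.rpow_add two_pos]
      exact Real.one_le_rpow one_le_two (by linarith)
    · rw [ind_neg h, h_prod]
      positivity
  calc prob α (fun f => a < #{i ∈ s | A i f})
      ≤ mean α (fun f => 2 ^ (-a) * ∏ i ∈ s, (1 + ind (A i f))) := mean_mono hα₀ hα₁ markov
    _ = 2 ^ (-a) * ∏ i ∈ s, (1 + prob α (A i)) := by
      rw [mean_const_mul, mean_prod_of_dependsOn hJ fun i hi f f' h => by rw [hA i hi h]]
      simp only [mean_add (fun _ => 1), mean_const, prob]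

/-- The upper tail bound for the complementary events `¬ A i`. -/
lemma prob_card_filter_lt_le [∀ i f, Decidable (A i f)] (hα₀ : 0 ≤ α) (hα₁ : α ≤ 1)
    (hJ : (s : Set ι).PairwiseDisjoint J) (hA : ∀ i ∈ s, DependsOn (A i) (J i)) (a : ℝ) :
    prob α (fun f => (#{i ∈ s | A i f} : ℝ) < a) ≤ 2 ^ a * ∏ i ∈ s, (1 - prob α (A i) / 2) := by
  have hA_not : ∀ i ∈ s, DependsOn (fun f => ¬ A i f) (J i) := fun i hi _ _ h =>
    congrArg Not (hA i hi h)
  calc prob α (fun f => (#{i ∈ s | A i f} : ℝ) < a)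
      ≤ prob α (fun f => (#s - a : ℝ) < #{i ∈ s | ¬ A i f}) := prob_mono hα₀ hα₁ fun f hf => by
        have h_card := Finset.card_filter_add_card_filter_not (s := s) fun i => A i f
        rw [← h_card]
        push_cast
        linarith
    _ ≤ 2 ^ (-(#s - a)) * ∏ i ∈ s, (1 + prob α (fun f => ¬ A i f)) := by
        convert prob_lt_card_filter_le hα₀ hα₁ hJ hA_not _
    _ = 2 ^ a * ∏ i ∈ s, (1 - prob α (A i) / 2) := by
        rw [neg_sub, Real.rpow_sub two_pos, Real.rpow_natCast, div_mul_eq_mul_div, mul_div_assoc,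
          ← Finset.prod_const, ← Finset.prod_div_distrib]
        simp only [prob_not]
        congr 1
        exact Finset.prod_congr rfl fun i _ => by ring

lemma prob_mul_card_lt_card_filter_le [∀ i f, Decidable (A i f)] (hα₀ : 0 ≤ α) (hα₁ : α ≤ 1)
    (hJ : (s : Set ι).PairwiseDisjoint J) (hA : ∀ i ∈ s, DependsOn (A i) (J i)) {c : ℝ}
    (hc : 0 ≤ c) (hp : ∀ i ∈ s, prob α (A i) ≤ c / 2) :
    prob α (fun f => c * #s < #{i ∈ s | A i f}) ≤ 2 ^ (-(c * #s / 6)) :=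
  calc prob α (fun f => c * #s < #{i ∈ s | A i f})
      ≤ 2 ^ (-(c * #s)) * ∏ i ∈ s, (1 + prob α (A i)) := prob_lt_card_filter_le hα₀ hα₁ hJ hA _
    _ ≤ 2 ^ (-(c * #s)) * (1 + c / 2) ^ #s := by
        rw [← Finset.prod_const]
        gcongr with i hi
        · exact fun i _ => by linarith [prob_nonneg hα₀ hα₁ (A i)]
        · exact hp i hi
    _ ≤ 2 ^ (-(c * #s / 6)) := two_rpow_neg_mul_one_add_half_pow_le hc _

end Independence

end BernoulliProduct

section RandomSubsets

open BernoulliProduct Function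

variable {U : Type*} [Fintype U] {k : ℕ} {α : ℝ}

lemma subsetOf_curry (f : Fin k × U → Bool) (i : Fin k) :
    subsetOf (curry f) i = ({u | f (i, u) = true} : Finset U) :=
  rfl

variable [DecidableEq U]

lemma prSets_eq_prob (E : Set (Fin k → U → Bool)) :
    prSets k α E = prob α (fun f : Fin k × U → Bool => curry f ∈ E) := by
  rw [prSets, prob, mean]
  refine Fintype.sum_equiv (Equiv.curry (Fin k) U Bool).symm _ _ fun ω => ?_
  by_cases hω : ω ∈ E
  · simp [Set.indicator_of_mem hω, ind_pos hω, weight, Fintype.prod_prod_type]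
  · simp [Set.indicator_of_notMem hω, ind_neg hω]

lemma prob_not_forall_card_subsetOf_le (hα₀ : 0 ≤ α) (hα₁ : α ≤ 1) :
    prob α (fun f : Fin k × U → Bool =>
        ¬ ∀ i, ((subsetOf (curry f) i).card : ℝ) ≤ 2 * α * Fintype.card U) ≤
      2 ^ (Real.logb 2 k - α * Fintype.card U / 3) :=
  calc _ ≤ prob α (fun f : Fin k × U → Bool => ∃ i ∈ (univ : Finset (Fin k)),
        2 * α * (#(univ : Finset U) : ℝ) < #{u ∈ univ | f (i, u) = true}) :=
        prob_mono hα₀ hα₁ fun f hf => by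
          push Not at hf
          obtain ⟨i, hi⟩ := hf
          rw [subsetOf_curry, ← Finset.card_univ] at hi
          exact ⟨i, Finset.mem_univ i, hi⟩
    _ ≤ #(univ : Finset (Fin k)) * 2 ^ (-(2 * α * #(univ : Finset U) / 6)) :=
        prob_exists_le_card_mul hα₀ hα₁ _ _ fun i _ =>
          prob_mul_card_lt_card_filter_le hα₀ hα₁ (Set.pairwiseDisjoint_fiber Prod.snd _)
            (fun u _ _ _ h => by simp only [h (i, u) rfl]) (by positivity)
            fun u _ => by rw [prob_eq_true]; linarith
    _ = (k : ℝ) ^ 1 * 2 ^ (-(α * Fintype.card U / 3)) := by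
        simp only [Finset.card_univ, Fintype.card_fin, pow_one]
        ring_nf
    _ ≤ 2 ^ (Real.logb 2 k - α * Fintype.card U / 3) := by
        simpa using natCast_pow_mul_two_rpow_neg_le k 1 _

lemma prob_card_filter_lt_half_mul_le (hα₀ : 0 < α) (hα₁ : α ≤ 1) {μ : ℝ} (hμ : 0 < μ)
    {I : Finset (Fin k)} (hI : 8 * Real.log (2 / μ) / α ≤ #I) (u : U) :
    prob α (fun f : Fin k × U → Bool => (#{i ∈ I | f (i, u) = true} : ℝ) < α / 2 * #I) ≤
      μ / 2 :=
  calc _ ≤ 2 ^ (α / 2 * #I) * ∏ i ∈ I, (1 - prob α (fun f : Fin k × U → Bool => f (i, u)) / 2) :=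
        prob_card_filter_lt_le hα₀.le hα₁ (Set.pairwiseDisjoint_fiber Prod.fst _)
          (fun i _ _ _ h => by simp only [h (i, u) rfl]) _
    _ = 2 ^ (α / 2 * #I) * (1 - α / 2) ^ #I := by simp only [prob_eq_true, Finset.prod_const]
    _ ≤ Real.exp (-(α * #I / 8)) := two_rpow_mul_one_sub_half_pow_le_exp hα₀.le (by linarith) _
    _ ≤ Real.exp (-Real.log (2 / μ)) := by
        rw [div_le_iff₀ hα₀] at hI
        exact Real.exp_le_exp.2 (by linarith)
    _ = μ / 2 := exp_neg_log_two_div hμ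

lemma prob_not_forall_isUniformOn_le (hα₀ : 0 < α) (hα₁ : α ≤ 1) {μ : ℝ} (hμ₀ : 0 < μ)
    (hμ₁ : μ ≤ 1) {n : ℕ} (hn : 8 * Real.log (2 / μ) / α ≤ n) :
    prob α (fun f : Fin k × U → Bool => ¬ ∀ I : Finset (Fin k), #I = n →
        IsUniformOn (subsetOf (curry f)) I (α / 2) μ) ≤
      2 ^ (Real.logb 2 k * n - μ ^ 2 * Fintype.card U / 16) :=
  calc _ ≤ prob α (fun f : Fin k × U → Bool => ∃ I ∈ powersetCard n (univ : Finset (Fin k)),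
        μ * (#(univ : Finset U) : ℝ) <
          #{u ∈ univ | (#{i ∈ I | f (i, u) = true} : ℝ) < α / 2 * #I}) :=
        prob_mono hα₀.le hα₁ fun f hf => by
          push Not at hf
          obtain ⟨I, hI, h_not⟩ := hf
          refine ⟨I, Finset.mem_powersetCard_univ.2 hI, ?_⟩
          contrapose! h_not
          apply isUniformOn_of_card_filter_le
          simpa [subsetOf_curry] using h_not
    _ ≤ #(powersetCard n (univ : Finset (Fin k))) * 2 ^ (-(μ * #(univ : Finset U) / 6)) :=
        prob_exists_le_card_mul hα₀.le hα₁ _ _ fun I hI =>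
          prob_mul_card_lt_card_filter_le hα₀.le hα₁ (Set.pairwiseDisjoint_fiber Prod.snd _)
            (fun u _ f f' h => by
              simp only [show ∀ i, f (i, u) = f' (i, u) from fun i => h (i, u) rfl])
            hμ₀.le fun u _ => prob_card_filter_lt_half_mul_le hα₀ hα₁ hμ₀
              (by rwa [Finset.mem_powersetCard_univ.1 hI]) u
    _ ≤ (k : ℝ) ^ n * 2 ^ (-(μ ^ 2 * Fintype.card U / 16)) := by
        rw [Finset.card_powersetCard, Finset.card_univ, Fintype.card_fin, Finset.card_univ]
        have h_exp : μ ^ 2 * Fintype.card U / 16 ≤ μ * Fintype.card U / 6 := by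
          have h_sq : μ ^ 2 ≤ μ := by nlinarith
          have h_card : (0 : ℝ) ≤ Fintype.card U := by positivity
          nlinarith [mul_le_mul_of_nonneg_right h_sq h_card]
        gcongr
        · exact_mod_cast Nat.choose_le_pow k n
        · exact one_le_two
    _ ≤ 2 ^ (Real.logb 2 k * n - μ ^ 2 * Fintype.card U / 16) :=
        natCast_pow_mul_two_rpow_neg_le k n _

lemma prob_forall_not_forall_mem_le (hα₀ : 0 < α) (hα₁ : α ≤ 1) {η : ℝ} (hη : 0 < η)
    {r ℓ : ℕ} (hr : Real.log (2 / η) / α ^ ℓ ≤ r) {I : Fin r → Finset (Fin k)}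
    (hI : I ∈ admissibleFamilies (Fin k) r ℓ) (u : U) :
    prob α (fun f : Fin k × U → Bool => ∀ a, ¬ ∀ i ∈ I a, f (i, u) = true) ≤ η / 2 := by
  simp only [admissibleFamilies, Finset.mem_filter, Finset.mem_univ, true_and] at hI
  obtain ⟨-, h_card, h_disj⟩ := hI
  have h_blocks : ((univ : Finset (Fin r)) : Set (Fin r)).PairwiseDisjoint
      fun a => (Prod.fst : Fin k × U → Fin k) ⁻¹' I a := fun a _ b _ hab =>
    (Finset.disjoint_coe.2 (h_disj hab)).preimage _
  have h_block : ∀ a, prob α (fun f : Fin k × U → Bool => ∀ i ∈ I a, f (i, u) = true)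
      = α ^ #(I a) := fun a => by
    rw [prob_forall_mem_of_dependsOn (Set.pairwiseDisjoint_fiber Prod.fst _)
      fun i _ _ _ h => by simp only [h (i, u) rfl]]
    simp only [prob_eq_true, Finset.prod_const]
  calc prob α (fun f : Fin k × U → Bool => ∀ a, ¬ ∀ i ∈ I a, f (i, u) = true)
      = ∏ a, (1 - α ^ #(I a)) := by
        simp only [← h_block, ← prob_not]
        rw [← prob_forall_mem_of_dependsOn h_blocks fun a _ f f' h =>
          propext (not_congr (forall₂_congr fun i hi => by rw [h (i, u) hi]))]
        simp only [Finset.mem_univ, true_implies]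
    _ ≤ ∏ _a : Fin r, (1 - α ^ ℓ) := Finset.prod_le_prod
        (fun a _ => sub_nonneg.2 (pow_le_one₀ hα₀.le hα₁))
        fun a _ => sub_le_sub_left (pow_le_pow_of_le_one hα₀.le hα₁ (h_card a)) 1
    _ = (1 - α ^ ℓ) ^ r := by simp
    _ ≤ Real.exp (-(α ^ ℓ * r)) := one_sub_pow_le_exp (pow_le_one₀ hα₀.le hα₁) r
    _ ≤ Real.exp (-Real.log (2 / η)) := by
        rw [div_le_iff₀ (by positivity)] at hr
        exact Real.exp_le_exp.2 (by linarith)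
    _ = η / 2 := exp_neg_log_two_div hη

lemma prob_not_isDisperser_le (hα₀ : 0 < α) (hα₁ : α ≤ 1) {η : ℝ} (hη : 0 < η) {r ℓ : ℕ}
    (hr : Real.log (2 / η) / α ^ ℓ ≤ r) :
    prob α (fun f : Fin k × U → Bool => ¬ IsDisperser (subsetOf (curry f)) r ℓ η) ≤
      2 ^ ((ℓ : ℝ) * r * Real.logb 2 (2 * k) - η * Fintype.card U / 6) :=
  calc _ ≤ prob α (fun f : Fin k × U → Bool => ∃ I ∈ admissibleFamilies (Fin k) r ℓ,
        η * (#(univ : Finset U) : ℝ) < #{u ∈ univ | ∀ a, ¬ ∀ i ∈ I a, f (i, u) = true}) :=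
        prob_mono hα₀.le hα₁ fun f hf => by
          by_contra h_none
          push Not at h_none
          refine hf (isDisperser_of_card_filter_le _ fun I hne hcard hdisj => ?_)
          simpa [subsetOf_curry] using
            h_none I (by simp [admissibleFamilies, hne, hcard, hdisj])
    _ ≤ #(admissibleFamilies (Fin k) r ℓ) * 2 ^ (-(η * #(univ : Finset U) / 6)) :=
        prob_exists_le_card_mul hα₀.le hα₁ _ _ fun I hI =>
          prob_mul_card_lt_card_filter_le hα₀.le hα₁ (Set.pairwiseDisjoint_fiber Prod.snd _)
            (fun u _ f f' h => by
              simp only [show ∀ i, f (i, u) = f' (i, u) from fun i => h (i, u) rfl])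
            hη.le fun u _ => prob_forall_not_forall_mem_le hα₀ hα₁ hη hr hI u
    _ ≤ ((2 * k : ℕ) : ℝ) ^ (ℓ * r) * 2 ^ (-(η * Fintype.card U / 6)) := by
        rw [Finset.card_univ]
        gcongr
        calc (#(admissibleFamilies (Fin k) r ℓ) : ℝ) ≤ (k : ℝ) ^ (ℓ * r) := by
              exact_mod_cast (card_admissibleFamilies_le (Fin k) r ℓ).trans_eq (by simp)
          _ ≤ ((2 * k : ℕ) : ℝ) ^ (ℓ * r) := by gcongr; linarith
    _ ≤ 2 ^ ((ℓ : ℝ) * r * Real.logb 2 (2 * k) - η * Fintype.card U / 6) := by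
        convert natCast_pow_mul_two_rpow_neg_le (2 * k) (ℓ * r) _ using 3
        push_cast
        ring

end RandomSubsets

theorem stmt18_general {U : Type*} [Fintype U] [DecidableEq U] (m k ℓ : ℕ)
    (hU : Fintype.card U = m)
    (α μ η : ℝ) (hα0 : 0 < α) (hα1 : α < 1) (hμ0 : 0 < μ) (hμ1 : μ < 1)
    (hη0 : 0 < η) :
    1 - (2 : ℝ) ^ (Real.logb 2 (k : ℝ) * (⌈8 * Real.log (2 / μ) / α⌉₊ : ℝ) -
          μ ^ 2 * (m : ℝ) / 16) -
        (2 : ℝ) ^ ((ℓ : ℝ) * (⌈Real.log (2 / η) / α ^ ℓ⌉₊ : ℝ) *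
          Real.logb 2 (2 * (k : ℝ)) - η * (m : ℝ) / 6) -
        (2 : ℝ) ^ (Real.logb 2 (k : ℝ) - α * (m : ℝ) / 3) ≤
      prSets (U := U) k α
        {ω | (∀ i : Fin k, ((subsetOf ω i).card : ℝ) ≤ 2 * α * (m : ℝ)) ∧
          IsDisperser (subsetOf ω) ⌈Real.log (2 / η) / α ^ ℓ⌉₊ ℓ η ∧
          (∀ I : Finset (Fin k), I.card = ⌈8 * Real.log (2 / μ) / α⌉₊ →
            IsUniformOn (subsetOf ω) I (α / 2) μ)} := by
  subst hU
  have h_size := prob_not_forall_card_subsetOf_le (U := U) (k := k) hα0.le hα1.le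
  have h_disp := prob_not_isDisperser_le (U := U) (k := k) hα0 hα1.le hη0
    (Nat.le_ceil (Real.log (2 / η) / α ^ ℓ))
  have h_unif := prob_not_forall_isUniformOn_le (U := U) (k := k) hα0 hα1.le hμ0 hμ1.le
    (Nat.le_ceil (8 * Real.log (2 / μ) / α))
  rw [prSets_eq_prob]
  refine le_trans ?_
    (BernoulliProduct.one_sub_prob_not_sub_prob_not_sub_prob_not_le hα0.le hα1.le _ _ _)
  linarith

/-- For random subsets `S₁, …, S_k` of an `m`-element universe, each including each element
independently with probability `α`, with probability at least
`1 − 2^{(log₂ k)·⌈8ln(2/μ)/α⌉ − μ²m/16} − 2^{ℓ·⌈ln(2/η)/α^ℓ⌉·log₂(2k) − ηm/6}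
 − 2^{log₂ k − αm/3}`, the following hold simultaneously: (i) every subset has size at
most `2αm`; (ii) the collection is a `(⌈ln(2/η)/α^ℓ⌉, ℓ, η)`-intersection disperser;
(iii) every subcollection of size `⌈8ln(2/μ)/α⌉` is `(α/2, μ)`-uniform. -/
theorem stmt18 {U : Type*} [Fintype U] [DecidableEq U] (m k ℓ : ℕ)
    (hU : Fintype.card U = m)
    (α μ η : ℝ) (hα0 : 0 < α) (hα1 : α < 1) (hμ0 : 0 < μ) (hμ1 : μ < 1)
    (hη0 : 0 < η) (hη1 : η < 1) :
    1 - (2 : ℝ) ^ (Real.logb 2 (k : ℝ) * (⌈8 * Real.log (2 / μ) / α⌉₊ : ℝ) -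
          μ ^ 2 * (m : ℝ) / 16) -
        (2 : ℝ) ^ ((ℓ : ℝ) * (⌈Real.log (2 / η) / α ^ ℓ⌉₊ : ℝ) *
          Real.logb 2 (2 * (k : ℝ)) - η * (m : ℝ) / 6) -
        (2 : ℝ) ^ (Real.logb 2 (k : ℝ) - α * (m : ℝ) / 3) ≤
      prSets (U := U) k α
        {ω | (∀ i : Fin k, ((subsetOf ω i).card : ℝ) ≤ 2 * α * (m : ℝ)) ∧
          IsDisperser (subsetOf ω) ⌈Real.log (2 / η) / α ^ ℓ⌉₊ ℓ η ∧
          (∀ I : Finset (Fin k), I.card = ⌈8 * Real.log (2 / μ) / α⌉₊ →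
            IsUniformOn (subsetOf ω) I (α / 2) μ)} :=
  stmt18_general m k ℓ hU α μ η hα0 hα1 hμ0 hμ1 hη0
end
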